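/- arXiv:0810.1707 — 4 statements merged into one kernel-verified Lean document; each statement's English description precedes it below -/
import Mathlib

section
/- Let X = (X_k, k ∈ ℤ) be a sequence of real random variables with the following property (D): for every infinite set Q ⊆ ℕ there exist an infinite set T ⊆ Q and a nondegenerate, non-normal probability measure μ on ℝ such that S_n/n^{1/2} converges in distribution to μ as n → ∞ along n ∈ T. Then there do not exist real constants a_n > 0 and b_n (n ∈ ℕ) and an infinite set T′ ⊆ ℕ such that a_n S_n + b_n converges in distribution to N(0,1) as n → ∞ along n ∈ T′. -/
open MeasureTheory ProbabilityTheory Filter Topology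
open scoped ENNReal NNReal

noncomputable section

/-- `λ_unps3`: the uniform distribution on the interval `[-√3, √3]`. -/
def lambdaUnps3 : Measure ℝ :=
  (ENNReal.ofReal (2 * Real.sqrt 3))⁻¹ •
    (volume.restrict (Set.Icc (-(Real.sqrt 3)) (Real.sqrt 3)))

/-- A family of real random variables is `m`-tuplewise independent if every subfamily
indexed by a set of cardinality between 2 and `m` is independent. -/
def TuplewiseIndep {Ω ι : Type*} [MeasurableSpace Ω] (P : Measure Ω) (m : ℕ)
    (X : ι → Ω → ℝ) : Prop :=
  ∀ S : Finset ι, 2 ≤ S.card → S.card ≤ m →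
    iIndepFun
      (fun i : {i // i ∈ S} => X i) P

/-- The map `φ_n : ℝ^n → ℝ^n`. -/
def phi (n : ℕ) (x : Fin n → ℝ) : Fin n → ℝ :=
  if 0 < ∑ i, x i then x else if (∑ i, x i) = 0 then 0 else -x

/-- Splicing `L` blocks of length `n` into one vector of length `L * n`:
block `ℓ` occupies coordinates `ℓ*n, …, ℓ*n + n - 1`. -/
def splice {L n : ℕ} (x : Fin L → Fin n → ℝ) : Fin (L * n) → ℝ :=
  fun k => x (finProdFinEquiv.symm k).1 (finProdFinEquiv.symm k).2

/-- The map `ψ_{n,j} : ℝ^{Ln} → ℝ^{Ln}`: if the product of the block sums is positive,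
multiply block `j` by `-1`; otherwise do nothing. -/
def psi (L n : ℕ) (j : Fin L) (y : Fin (L * n) → ℝ) : Fin (L * n) → ℝ :=
  if 0 < ∏ ℓ : Fin L, ∑ i : Fin n, y (finProdFinEquiv (ℓ, i)) then
    fun k => if (finProdFinEquiv.symm k).1 = j then -y k else y k
  else y

/-- The set `Υ = {x ∈ {-1,1}^L : ∏ i, x i = -1}`. -/
def Upsilon (L : ℕ) : Set (Fin L → ℝ) :=
  {x | (∀ i, x i = 1 ∨ x i = -1) ∧ ∏ i, x i = -1}

/-- `ν`: the uniform distribution on `Υ`, i.e. `ν({x}) = 2^{-(L-1)}` for `x ∈ Υ`. -/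
def nuL (L : ℕ) : Measure (Fin L → ℝ) :=
  ((2 : ℝ≥0∞) ^ (L - 1))⁻¹ • (Measure.count.restrict (Upsilon L))

/-- `θ(μ)`: the law on `ℝ^{Ln}` of `⟨V_0 φ_n(W^(0)) | ⋯ | V_{L-1} φ_n(W^(L-1))⟩`,
where `W^(0), …, W^(L-1)` are i.i.d. with law `μ` and `V ~ ν` is independent of them. -/
def theta (L n : ℕ) (μ : Measure (Fin n → ℝ)) : Measure (Fin (L * n) → ℝ) :=
  Measure.map
    (fun p : (Fin L → ℝ) × (Fin L → (Fin n → ℝ)) =>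
      splice (fun ℓ => p.1 ℓ • phi n (p.2 ℓ)))
    ((nuL L).prod (Measure.pi fun _ : Fin L => μ))

/-- Condition `H(n)` for a probability measure `μ` on `ℝ^n` (with parameter `L`). -/
structure CondH (L n : ℕ) (μ : Measure (Fin n → ℝ)) : Prop where
  abs_cont : μ ≪ volume
  marginal : ∀ k : Fin n, Measure.map (fun x => x k) μ = lambdaUnps3
  tuplewise : TuplewiseIndep μ (L - 1) (fun k (x : Fin n → ℝ) => x k)
  abs_indep : 2 ≤ n → iIndepFun
      (fun k (x : Fin n → ℝ) => |x k|) μ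
  neg_inv : Measure.map (fun x => -x) μ = μ
  perm : ∀ j : Fin n, ∃ σ : Equiv.Perm (Fin n),
      σ ⟨0, j.pos⟩ = j ∧ Measure.map (fun x => x ∘ σ) μ = μ
  prod_nonpos : L ≤ n → ∀ S : Finset (Fin n), S.card = L →
      (∫ x, ∏ i ∈ S, x i ∂μ) ≤ 0

/-- The recursively defined measures `μ_n` on `ℝ^{L^n}`:
`μ_0 = λ_unps3` and `μ_{n+1} = θ(μ_n)`. -/
def muSeq (L : ℕ) : (n : ℕ) → Measure (Fin (L ^ n) → ℝ)
  | 0 => Measure.map (fun x : ℝ => fun _ : Fin (L ^ 0) => x) lambdaUnps3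
  | n + 1 =>
    Measure.map
      (fun (x : Fin (L * L ^ n) → ℝ) (k : Fin (L ^ (n + 1))) =>
        x (Fin.cast (show L ^ (n + 1) = L * L ^ n by rw [pow_succ, Nat.mul_comm]) k))
      (theta L (L ^ n) (muSeq L n))

/-- `W = (W_k, k ∈ ℤ)` has law `D(n, μ)`: the successive length-`n` blocks
`(W_{nu}, …, W_{nu+n-1})`, `u ∈ ℤ`, are independent and each has law `μ`. -/
def HasLawD {Ω : Type*} [MeasurableSpace Ω] (P : Measure Ω) (n : ℕ)
    (μ : Measure (Fin n → ℝ)) (W : ℤ → Ω → ℝ) : Prop :=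
  iIndepFun
      (fun (u : ℤ) (ω : Ω) => fun i : Fin n => W ((n : ℤ) * u + (i : ℤ)) ω) P ∧
    ∀ u : ℤ, Measure.map (fun ω => fun i : Fin n => W ((n : ℤ) * u + (i : ℤ)) ω) P = μ

/-- Strict stationarity of a sequence of real random variables indexed by `ℤ`. -/
def StrictlyStationary {Ω : Type*} [MeasurableSpace Ω] (P : Measure Ω)
    (X : ℤ → Ω → ℝ) : Prop :=
  ∀ (j ℓ : ℤ) (m : ℕ),
    Measure.map (fun ω => fun i : Fin (m + 1) => X (j + (i : ℤ)) ω) P =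
    Measure.map (fun ω => fun i : Fin (m + 1) => X (ℓ + (i : ℤ)) ω) P

/-- `J(n) = Σ_{u=1}^n L^{u-1} κ_u` (here `κ u` stands for the paper's `κ_{u+1}`). -/
def Jfun (L : ℕ) {Ω : Type*} (κ : ℕ → Ω → Fin L) (n : ℕ) (ω : Ω) : ℕ :=
  ∑ u ∈ Finset.range n, L ^ u * (κ u ω : ℕ)

end

open BoundedContinuousFunction

noncomputable def myBump (R R' : ℝ) : ℝ →ᵇ ℝ :=
  BoundedContinuousFunction.ofNormedAddCommGroup
    (fun x => max 0 (min 1 ((R' - |x|) / (R' - R))))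
    (by fun_prop) 1
    (fun x => by
      rw [Real.norm_eq_abs, abs_le]
      constructor
      · linarith [le_max_left (0:ℝ) (min 1 ((R' - |x|) / (R' - R)))]
      · exact max_le (by norm_num) (le_trans (min_le_left _ _) le_rfl))

lemma myBump_nonneg (R R' x : ℝ) : 0 ≤ myBump R R' x := le_max_left _ _
lemma myBump_le_one (R R' x : ℝ) : myBump R R' x ≤ 1 :=
  max_le (by norm_num) (min_le_left _ _)

lemma myBump_eq_one {R R' x : ℝ} (h : R < R') (hx : |x| ≤ R) : myBump R R' x = 1 := by
  have h1 : (1:ℝ) ≤ (R' - |x|) / (R' - R) := by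
    rw [le_div_iff₀ (by linarith)]; linarith
  simp only [myBump, BoundedContinuousFunction.coe_ofNormedAddCommGroup]
  rw [min_eq_left h1, max_eq_right (by norm_num)]

lemma myBump_eq_zero {R R' x : ℝ} (h : R < R') (hx : R' ≤ |x|) : myBump R R' x = 0 := by
  have h1 : (R' - |x|) / (R' - R) ≤ 0 := div_nonpos_of_nonpos_of_nonneg (by linarith) (by linarith)
  simp only [myBump, BoundedContinuousFunction.coe_ofNormedAddCommGroup]
  rw [max_eq_left (le_trans (min_le_right _ _) h1)]

-- indicator_{Icc(-R,R)} ≤ myBump R R' ≤ indicator_{Icc(-R',R')}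
lemma indicator_le_myBump {R R' : ℝ} (h : R < R') :
    ∀ x, (Set.Icc (-R) R).indicator (fun _ => (1:ℝ)) x ≤ myBump R R' x := by
  intro x
  by_cases hx : x ∈ Set.Icc (-R) R
  · rw [Set.indicator_of_mem hx, myBump_eq_one h (abs_le.mpr ⟨hx.1, hx.2⟩)]
  · rw [Set.indicator_of_notMem hx]; exact myBump_nonneg _ _ _

lemma myBump_le_indicator {R R' : ℝ} (h : R < R') (hR : 0 ≤ R) :
    ∀ x, myBump R R' x ≤ (Set.Icc (-R') R').indicator (fun _ => (1:ℝ)) x := by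
  intro x
  by_cases hx : x ∈ Set.Icc (-R') R'
  · rw [Set.indicator_of_mem hx]; exact myBump_le_one _ _ _
  · rw [Set.indicator_of_notMem hx, myBump_eq_zero h ?_]
    simp only [Set.mem_Icc, not_and_or, not_le] at hx
    rcases hx with h1 | h1
    · rw [abs_of_neg (by linarith)]; linarith
    · rw [abs_of_pos (by linarith)]; linarith

-- real-valued version of an ℝ≥0-valued BCF
noncomputable def nnToReal (f : ℝ →ᵇ ℝ≥0) : ℝ →ᵇ ℝ :=
  BoundedContinuousFunction.comp ((↑) : ℝ≥0 → ℝ) (isometry_subtype_coe.lipschitz) f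

lemma ext_prob {μ ν : Measure ℝ} [IsProbabilityMeasure μ] [IsProbabilityMeasure ν]
    (h : ∀ f : ℝ →ᵇ ℝ, ∫ x, f x ∂μ = ∫ x, f x ∂ν) : μ = ν := by
  apply MeasureTheory.ext_of_forall_lintegral_eq_of_IsFiniteMeasure
  intro f
  have h1 := BoundedContinuousFunction.toReal_lintegral_coe_eq_integral f μ
  have h2 := BoundedContinuousFunction.toReal_lintegral_coe_eq_integral f ν
  have h3 : ∫ x, ((f x : ℝ)) ∂μ = ∫ x, ((f x : ℝ)) ∂ν := by
    have := h (nnToReal f)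
    exact this
  have hfin1 : ∫⁻ x, (f x : ℝ≥0∞) ∂μ ≠ ⊤ :=
    (BoundedContinuousFunction.lintegral_lt_top_of_nnreal μ f).ne
  have hfin2 : ∫⁻ x, (f x : ℝ≥0∞) ∂ν ≠ ⊤ :=
    (BoundedContinuousFunction.lintegral_lt_top_of_nnreal ν f).ne
  rw [← ENNReal.toReal_eq_toReal_iff' hfin1 hfin2] at *
  rw [h1, h2]; exact h3


lemma exists_mass (μ : Measure ℝ) [IsProbabilityMeasure μ] {ε : ℝ} (hε : 0 < ε) :
    ∃ M : ℝ, 0 < M ∧ 1 - ε < (μ (Set.Icc (-M) M)).toReal := by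
  have hU : (⋃ k : ℕ, Set.Icc (-(k:ℝ)) (k:ℝ)) = Set.univ := by
    ext x; simp only [Set.mem_iUnion, Set.mem_univ, iff_true, Set.mem_Icc]
    obtain ⟨k, hk⟩ := exists_nat_gt |x|
    exact ⟨k, by cases abs_le.mp hk.le with | _ h1 h2 => constructor <;> linarith⟩
  have hmono : Monotone (fun k : ℕ => Set.Icc (-(k:ℝ)) (k:ℝ)) := by
    intro i j hij
    exact Set.Icc_subset_Icc (by simp [Nat.cast_le.mpr hij]) (by exact_mod_cast hij)
  have htend := tendsto_measure_iUnion_atTop (μ := μ) hmono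
  rw [hU, measure_univ] at htend
  have htend' : Tendsto (fun k : ℕ => (μ (Set.Icc (-(k:ℝ)) (k:ℝ))).toReal) atTop (𝓝 1) := by
    have := (ENNReal.tendsto_toReal (by norm_num : (1:ℝ≥0∞) ≠ ⊤)).comp htend
    exact this
  have : ∀ᶠ k : ℕ in atTop, 1 - ε < (μ (Set.Icc (-(k:ℝ)) (k:ℝ))).toReal :=
    htend' (Ioi_mem_nhds (by linarith))
  obtain ⟨k, hk⟩ := (this.and (eventually_ge_atTop 1)).exists
  exact ⟨k, by exact_mod_cast hk.2, hk.1⟩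

lemma integral_indicator_Icc (ν : Measure ℝ) [IsProbabilityMeasure ν] (M : ℝ) :
    ∫ x, (Set.Icc (-M) M).indicator (fun _ => (1:ℝ)) x ∂ν = (ν (Set.Icc (-M) M)).toReal := by
  exact MeasureTheory.integral_indicator_one measurableSet_Icc

lemma indicator_integrable (ν : Measure ℝ) [IsProbabilityMeasure ν] {s : Set ℝ}
    (hs : MeasurableSet s) : Integrable (s.indicator (fun _ => (1:ℝ))) ν := by
  refine (integrable_indicator_iff hs).mpr ?_
  exact (integrableOn_const_iff).mpr (Or.inr (measure_lt_top ν s))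

lemma toReal_compl_lt {ν : Measure ℝ} [IsProbabilityMeasure ν] {s : Set ℝ}
    (hs : MeasurableSet s) {ε : ℝ} (h : 1 - ε < (ν s).toReal) : (ν sᶜ).toReal < ε := by
  have h1 : ν sᶜ = 1 - ν s := prob_compl_eq_one_sub hs
  have h2 : ν s ≤ 1 := prob_le_one
  rw [h1, ENNReal.toReal_sub_of_le h2 (by norm_num)]
  have : (ν s).toReal ≤ 1 := by
    simpa using ENNReal.toReal_mono (by norm_num) h2
  simp only [ENNReal.toReal_one]
  linarith

lemma tight {F : Filter ℕ} (ν : ℕ → Measure ℝ) [∀ n, IsProbabilityMeasure (ν n)]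
    (μ : Measure ℝ) [IsProbabilityMeasure μ]
    (h1 : ∀ f : ℝ →ᵇ ℝ, Tendsto (fun n => ∫ x, f x ∂ν n) F (𝓝 (∫ x, f x ∂μ)))
    {ε : ℝ} (hε : 0 < ε) :
    ∃ M : ℝ, 0 < M ∧ ∀ᶠ n in F, ((ν n) (Set.Icc (-M) M)ᶜ).toReal < ε := by
  obtain ⟨M₀, hM₀, hmass⟩ := exists_mass μ (half_pos hε)
  have hlt : M₀ < M₀ + 1 := by linarith
  set g := myBump M₀ (M₀ + 1) with hg
  have hgμ : 1 - ε / 2 < ∫ x, g x ∂μ := by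
    calc 1 - ε/2 < (μ (Set.Icc (-M₀) M₀)).toReal := hmass
    _ = ∫ x, (Set.Icc (-M₀) M₀).indicator (fun _ => (1:ℝ)) x ∂μ :=
        (integral_indicator_Icc μ M₀).symm
    _ ≤ ∫ x, g x ∂μ :=
        integral_mono (indicator_integrable μ measurableSet_Icc) (g.integrable μ)
          (indicator_le_myBump hlt)
  have hev : ∀ᶠ n in F, 1 - ε < ∫ x, g x ∂ν n := by
    have := (h1 g) (Ioi_mem_nhds (by linarith : 1 - ε < ∫ x, g x ∂μ))
    exact this
  refine ⟨M₀ + 1, by linarith, ?_⟩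
  filter_upwards [hev] with n hn
  apply toReal_compl_lt measurableSet_Icc
  calc 1 - ε < ∫ x, g x ∂ν n := hn
  _ ≤ ∫ x, (Set.Icc (-(M₀+1)) (M₀+1)).indicator (fun _ => (1:ℝ)) x ∂ν n :=
      integral_mono (g.integrable (ν n)) (indicator_integrable (ν n) measurableSet_Icc)
        (myBump_le_indicator hlt hM₀.le)
  _ = ((ν n) (Set.Icc (-(M₀+1)) (M₀+1))).toReal := integral_indicator_Icc (ν n) (M₀+1)

noncomputable def affComp (f : ℝ →ᵇ ℝ) (c d : ℝ) : ℝ →ᵇ ℝ :=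
  f.compContinuous ⟨fun x => c * x + d, by fun_prop⟩

lemma affComp_apply (f : ℝ →ᵇ ℝ) (c d x : ℝ) : affComp f c d x = f (c * x + d) := rfl

lemma escape {F : Filter ℕ} [F.NeBot] (ν : ℕ → Measure ℝ) [∀ n, IsProbabilityMeasure (ν n)]
    (μ γ : Measure ℝ) [IsProbabilityMeasure μ] [IsProbabilityMeasure γ]
    (c d : ℕ → ℝ) {α : ℝ}
    (h1 : ∀ f : ℝ →ᵇ ℝ, Tendsto (fun n => ∫ x, f x ∂ν n) F (𝓝 (∫ x, f x ∂μ)))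
    (h2 : ∀ f : ℝ →ᵇ ℝ, Tendsto (fun n => ∫ x, f (c n * x + d n) ∂ν n) F (𝓝 (∫ x, f x ∂γ)))
    (hc : Tendsto c F (𝓝 α)) (hd : Tendsto (fun n => |d n|) F atTop) : False := by
  obtain ⟨R, hR, hRmass⟩ := exists_mass γ (by norm_num : (0:ℝ) < 1/2)
  set f₀ := myBump R (R + 1) with hf₀
  have hRlt : R < R + 1 := by linarith
  have hL : 1 - 1/2 < ∫ x, f₀ x ∂γ := by
    calc 1 - 1/2 < (γ (Set.Icc (-R) R)).toReal := hRmass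
    _ = ∫ x, (Set.Icc (-R) R).indicator (fun _ => (1:ℝ)) x ∂γ := (integral_indicator_Icc γ R).symm
    _ ≤ ∫ x, f₀ x ∂γ :=
        integral_mono (indicator_integrable γ measurableSet_Icc) (f₀.integrable γ)
          (indicator_le_myBump hRlt)
  obtain ⟨M, hM, hMev⟩ := tight ν μ h1 (by norm_num : (0:ℝ) < 1/4)
  have hcev : ∀ᶠ n in F, |c n| ≤ |α| + 1 := by
    have := hc (Metric.ball_mem_nhds α one_pos)
    filter_upwards [this] with n hn
    have : |c n - α| < 1 := by simpa [Real.dist_eq] using hn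
    calc |c n| = |c n - α + α| := by ring_nf
    _ ≤ |c n - α| + |α| := abs_add_le _ _
    _ ≤ |α| + 1 := by linarith
  have hdev : ∀ᶠ n in F, R + 1 + (|α| + 1) * M < |d n| :=
    hd (eventually_gt_atTop _)
  have key : ∀ᶠ n in F, ∫ x, f₀ (c n * x + d n) ∂ν n ≤ 1/4 := by
    filter_upwards [hMev, hcev, hdev] with n hn1 hn2 hn3
    have hzero : ∀ x ∈ Set.Icc (-M) M, f₀ (c n * x + d n) = 0 := by
      intro x hx
      apply myBump_eq_zero hRlt
      have hxM : |x| ≤ M := abs_le.mpr ⟨hx.1, hx.2⟩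
      have h4 : |c n * x| ≤ (|α| + 1) * M := by
        rw [abs_mul]
        exact mul_le_mul hn2 hxM (abs_nonneg x) (by positivity)
      have : |d n| - |c n * x| ≤ |c n * x + d n| := by
        have h6 := abs_sub_abs_le_abs_sub (d n) (-(c n * x))
        rw [abs_neg, sub_neg_eq_add] at h6
        simpa [add_comm] using h6
      linarith
    have hle : ∀ x, f₀ (c n * x + d n) ≤ (Set.Icc (-M) M)ᶜ.indicator (fun _ => (1:ℝ)) x := by
      intro x
      by_cases hx : x ∈ Set.Icc (-M) M
      · rw [Set.indicator_of_notMem (by simpa using hx), hzero x hx]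
      · rw [Set.indicator_of_mem (by simpa using hx)]
        exact myBump_le_one _ _ _
    calc ∫ x, f₀ (c n * x + d n) ∂ν n
        ≤ ∫ x, (Set.Icc (-M) M)ᶜ.indicator (fun _ => (1:ℝ)) x ∂ν n :=
          integral_mono ((affComp f₀ (c n) (d n)).integrable (ν n))
            (indicator_integrable (ν n) measurableSet_Icc.compl) hle
    _ = ((ν n) (Set.Icc (-M) M)ᶜ).toReal := MeasureTheory.integral_indicator_one
          measurableSet_Icc.compl
    _ ≤ 1/4 := hn1.le
  have := le_of_tendsto (h2 f₀) key
  linarith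

lemma integrable_affComp (f : ℝ →ᵇ ℝ) (c d : ℝ) (ν : Measure ℝ) [IsProbabilityMeasure ν] :
    Integrable (fun x => f (c * x + d)) ν := (affComp f c d).integrable ν

lemma conv {F : Filter ℕ} [F.NeBot] (ν : ℕ → Measure ℝ) [∀ n, IsProbabilityMeasure (ν n)]
    (μ γ : Measure ℝ) [IsProbabilityMeasure μ] [IsProbabilityMeasure γ]
    (c d : ℕ → ℝ) {α β : ℝ}
    (h1 : ∀ f : ℝ →ᵇ ℝ, Tendsto (fun n => ∫ x, f x ∂ν n) F (𝓝 (∫ x, f x ∂μ)))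
    (h2 : ∀ f : ℝ →ᵇ ℝ, Tendsto (fun n => ∫ x, f (c n * x + d n) ∂ν n) F (𝓝 (∫ x, f x ∂γ)))
    (hc : Tendsto c F (𝓝 α)) (hd : Tendsto d F (𝓝 β)) :
    γ = μ.map (fun x => α * x + β) := by
  have hmeas : Measurable (fun x : ℝ => α * x + β) := by fun_prop
  have : IsProbabilityMeasure (μ.map (fun x => α * x + β)) :=
    Measure.isProbabilityMeasure_map hmeas.aemeasurable
  apply ext_prob
  intro f
  have hmap : ∫ x, f x ∂(μ.map (fun x => α * x + β)) = ∫ x, f (α * x + β) ∂μ :=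
    integral_map hmeas.aemeasurable (f.continuous.measurable.aestronglyMeasurable)
  rw [hmap]
  have hB : Tendsto (fun n => ∫ x, f (α * x + β) ∂ν n) F (𝓝 (∫ x, f (α * x + β) ∂μ)) := by
    have := h1 (affComp f α β)
    simpa only [affComp_apply] using this
  have hdiff : Tendsto
      (fun n => (∫ x, f (c n * x + d n) ∂ν n) - ∫ x, f (α * x + β) ∂ν n) F (𝓝 0) := by
    rw [Metric.tendsto_nhds]
    intro ε hε
    have hK : (0:ℝ) < 1 + 2 * ‖f‖ := by positivity
    set ε' := ε / (2 * (1 + 2 * ‖f‖)) with hε'def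
    have hε' : 0 < ε' := by positivity
    obtain ⟨M, hM, hMev⟩ := tight ν μ h1 hε'
    set C := (|α| + 1) * M + |β| + 1 with hCdef
    have hunif := (isCompact_Icc (a := -C) (b := C)).uniformContinuousOn_of_continuous
      f.continuous.continuousOn
    rw [Metric.uniformContinuousOn_iff] at hunif
    obtain ⟨δ, hδ, hδ'⟩ := hunif ε' hε'
    have hcev : ∀ᶠ n in F, |c n - α| < min 1 (δ / (2 * M)) := by
      have := Metric.tendsto_nhds.mp hc (min 1 (δ / (2 * M))) (by positivity)
      simpa [Real.dist_eq] using this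
    have hdev : ∀ᶠ n in F, |d n - β| < min 1 (δ / 2) := by
      have := Metric.tendsto_nhds.mp hd (min 1 (δ / 2)) (by positivity)
      simpa [Real.dist_eq] using this
    filter_upwards [hMev, hcev, hdev] with n hn1 hn2 hn3
    have hc1 : |c n - α| < 1 := lt_of_lt_of_le hn2 (min_le_left _ _)
    have hc2 : |c n - α| < δ / (2 * M) := lt_of_lt_of_le hn2 (min_le_right _ _)
    have hd1 : |d n - β| < 1 := lt_of_lt_of_le hn3 (min_le_left _ _)
    have hd2 : |d n - β| < δ / 2 := lt_of_lt_of_le hn3 (min_le_right _ _)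
    -- pointwise bound
    have hpt : ∀ x, |f (c n * x + d n) - f (α * x + β)| ≤
        ε' + (2 * ‖f‖) * (Set.Icc (-M) M)ᶜ.indicator (fun _ => (1:ℝ)) x := by
      intro x
      by_cases hx : x ∈ Set.Icc (-M) M
      · rw [Set.indicator_of_notMem (by simpa using hx), mul_zero, add_zero]
        have hxM : |x| ≤ M := abs_le.mpr ⟨hx.1, hx.2⟩
        have hy : c n * x + d n ∈ Set.Icc (-C) C := by
          have h5 : |c n * x + d n| ≤ C := by
            have e1 : |c n| ≤ |α| + 1 := by
              have := abs_sub_abs_le_abs_sub (c n) α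
              linarith
            have e2 : |d n| ≤ |β| + 1 := by
              have := abs_sub_abs_le_abs_sub (d n) β
              linarith
            calc |c n * x + d n| ≤ |c n * x| + |d n| := abs_add_le _ _
            _ ≤ (|α| + 1) * M + (|β| + 1) := by
                rw [abs_mul]
                exact add_le_add (mul_le_mul e1 hxM (abs_nonneg x) (by positivity)) e2
            _ = C := by rw [hCdef]; ring
          exact Set.mem_Icc.mpr ⟨neg_le_of_abs_le h5, le_of_abs_le h5⟩
        have hz : α * x + β ∈ Set.Icc (-C) C := by
          have h5 : |α * x + β| ≤ C := by
            calc |α * x + β| ≤ |α * x| + |β| := abs_add_le _ _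
            _ ≤ |α| * M + |β| := by
                rw [abs_mul]; gcongr
            _ ≤ C := by rw [hCdef]; nlinarith [abs_nonneg α, abs_nonneg β]
          exact Set.mem_Icc.mpr ⟨neg_le_of_abs_le h5, le_of_abs_le h5⟩
        have hdist : dist (c n * x + d n) (α * x + β) < δ := by
          rw [Real.dist_eq]
          calc |c n * x + d n - (α * x + β)| = |(c n - α) * x + (d n - β)| := by ring_nf
          _ ≤ |(c n - α) * x| + |d n - β| := abs_add_le _ _
          _ ≤ |c n - α| * M + |d n - β| := by
              rw [abs_mul]; gcongr
          _ < (δ / (2 * M)) * M + δ / 2 := by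
              have h9 := mul_lt_mul_of_pos_right hc2 hM
              linarith
          _ = δ := by field_simp; ring
        have := hδ' _ hy _ hz hdist
        rw [Real.dist_eq] at this
        exact this.le
      · rw [Set.indicator_of_mem (by simpa using hx), mul_one]
        calc |f (c n * x + d n) - f (α * x + β)|
            ≤ |f (c n * x + d n)| + |f (α * x + β)| := abs_sub _ _
        _ ≤ ‖f‖ + ‖f‖ := add_le_add (f.norm_coe_le_norm _) (f.norm_coe_le_norm _)
        _ ≤ ε' + 2 * ‖f‖ := by linarith
    -- integral bound
    have hint1 := integrable_affComp f (c n) (d n) (ν n)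
    have hint2 := integrable_affComp f α β (ν n)
    have hintInd : Integrable
        (fun x => ε' + (2 * ‖f‖) * (Set.Icc (-M) M)ᶜ.indicator (fun _ => (1:ℝ)) x) (ν n) :=
      (integrable_const _).add ((indicator_integrable (ν n) measurableSet_Icc.compl).const_mul _)
    have hbound : |(∫ x, f (c n * x + d n) ∂ν n) - ∫ x, f (α * x + β) ∂ν n| ≤
        ε' + (2 * ‖f‖) * (((ν n) (Set.Icc (-M) M)ᶜ).toReal) := by
      rw [← integral_sub hint1 hint2]
      calc |∫ x, (f (c n * x + d n) - f (α * x + β)) ∂ν n|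
          ≤ ∫ x, |f (c n * x + d n) - f (α * x + β)| ∂ν n := by
            simpa [Real.norm_eq_abs] using norm_integral_le_integral_norm (μ := ν n)
              (fun x => f (c n * x + d n) - f (α * x + β))
      _ ≤ ∫ x, (ε' + (2 * ‖f‖) * (Set.Icc (-M) M)ᶜ.indicator (fun _ => (1:ℝ)) x) ∂ν n :=
            integral_mono ((hint1.sub hint2).abs) hintInd hpt
      _ = ε' + (2 * ‖f‖) * (((ν n) (Set.Icc (-M) M)ᶜ).toReal) := by
            have hind : ∫ a, (Set.Icc (-M) M)ᶜ.indicator (fun _ => (1:ℝ)) a ∂ν n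
                = ((ν n) (Set.Icc (-M) M)ᶜ).toReal :=
              MeasureTheory.integral_indicator_one measurableSet_Icc.compl
            rw [integral_add (integrable_const _)
              ((indicator_integrable (ν n) measurableSet_Icc.compl).const_mul _),
              integral_const, integral_const_mul, hind]
            simp
    rw [Real.dist_eq, sub_zero]
    have : ε' + (2 * ‖f‖) * (((ν n) (Set.Icc (-M) M)ᶜ).toReal) ≤ ε' * (1 + 2 * ‖f‖) := by
      have h7 : (2 * ‖f‖) * (((ν n) (Set.Icc (-M) M)ᶜ).toReal) ≤ (2 * ‖f‖) * ε' := by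
        apply mul_le_mul_of_nonneg_left hn1.le (by positivity)
      nlinarith
    have h8 : ε' * (1 + 2 * ‖f‖) = ε / 2 := by
      rw [hε'def]; field_simp
    calc |(∫ x, f (c n * x + d n) ∂ν n) - ∫ x, f (α * x + β) ∂ν n|
        ≤ ε' + (2 * ‖f‖) * (((ν n) (Set.Icc (-M) M)ᶜ).toReal) := hbound
    _ ≤ ε' * (1 + 2 * ‖f‖) := this
    _ = ε / 2 := h8
    _ < ε := by linarith
  have hA : Tendsto (fun n => ∫ x, f (c n * x + d n) ∂ν n) F (𝓝 (∫ x, f (α * x + β) ∂μ)) := by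
    have := hdiff.add hB
    rw [zero_add] at this
    have heq : (fun n => ((∫ x, f (c n * x + d n) ∂ν n) - ∫ x, f (α * x + β) ∂ν n)
        + ∫ x, f (α * x + β) ∂ν n) = fun n => ∫ x, f (c n * x + d n) ∂ν n := by
      funext n; ring
    rwa [heq] at this
  exact tendsto_nhds_unique (h2 f) hA

lemma ereal_lim_exists {U : Ultrafilter ℕ} (g : ℕ → ℝ) :
    ∃ x : EReal, Tendsto (fun n => ((g n : ℝ) : EReal)) (U : Filter ℕ) (𝓝 x) := by
  refine ⟨(U.map (fun n => ((g n : ℝ) : EReal))).lim, ?_⟩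
  have := (U.map (fun n => ((g n : ℝ) : EReal))).le_nhds_lim
  rwa [Ultrafilter.coe_map] at this

lemma key {F : Filter ℕ} [F.NeBot] (ν : ℕ → Measure ℝ) [∀ n, IsProbabilityMeasure (ν n)]
    (μ γ : Measure ℝ) [IsProbabilityMeasure μ] [IsProbabilityMeasure γ]
    (c d : ℕ → ℝ) (hc : ∀ᶠ n in F, 0 < c n)
    (h1 : ∀ f : ℝ →ᵇ ℝ, Tendsto (fun n => ∫ x, f x ∂ν n) F (𝓝 (∫ x, f x ∂μ)))
    (h2 : ∀ f : ℝ →ᵇ ℝ, Tendsto (fun n => ∫ x, f (c n * x + d n) ∂ν n) F (𝓝 (∫ x, f x ∂γ))) :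
    (∃ e : ℝ, μ = Measure.dirac e) ∨
      ∃ α β : ℝ, 0 ≤ α ∧ γ = μ.map (fun x => α * x + β) := by
  obtain ⟨U, hU⟩ := Ultrafilter.exists_le F
  haveI : (U : Filter ℕ).NeBot := U.neBot
  have hc' : ∀ᶠ n in (U : Filter ℕ), 0 < c n := hc.filter_mono hU
  have h1' : ∀ f : ℝ →ᵇ ℝ,
      Tendsto (fun n => ∫ x, f x ∂ν n) (U : Filter ℕ) (𝓝 (∫ x, f x ∂μ)) :=
    fun f => (h1 f).mono_left hU
  have h2' : ∀ f : ℝ →ᵇ ℝ,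
      Tendsto (fun n => ∫ x, f (c n * x + d n) ∂ν n) (U : Filter ℕ) (𝓝 (∫ x, f x ∂γ)) :=
    fun f => (h2 f).mono_left hU
  obtain ⟨x, hx⟩ := ereal_lim_exists (U := U) c
  obtain ⟨y, hy⟩ := ereal_lim_exists (U := U) d
  induction x with
  | bot =>
    exfalso
    have hneg : ∀ᶠ n in (U : Filter ℕ), c n < 0 := by
      have := EReal.tendsto_nhds_bot_iff_real.mp hx 0
      filter_upwards [this] with n hn
      exact_mod_cast hn
    obtain ⟨n, hn1, hn2⟩ := (hc'.and hneg).exists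
    linarith
  | top =>
    -- c → ∞ : invert the roles
    have hcat : Tendsto c (U : Filter ℕ) atTop := by
      rw [tendsto_atTop]
      intro b
      have := EReal.tendsto_nhds_top_iff_real.mp hx b
      filter_upwards [this] with n hn
      exact le_of_lt (by exact_mod_cast hn)
    set ρ : ℕ → Measure ℝ := fun n => (ν n).map (fun x => c n * x + d n) with hρ
    haveI : ∀ n, IsProbabilityMeasure (ρ n) := fun n =>
      Measure.isProbabilityMeasure_map (by fun_prop : Measurable fun x => c n * x + d n).aemeasurable
    have hρint : ∀ (f : ℝ →ᵇ ℝ) n, ∫ x, f x ∂ρ n = ∫ x, f (c n * x + d n) ∂ν n := fun f n =>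
      integral_map (by fun_prop : Measurable fun x => c n * x + d n).aemeasurable
        f.continuous.measurable.aestronglyMeasurable
    have h2ρ : ∀ f : ℝ →ᵇ ℝ,
        Tendsto (fun n => ∫ x, f x ∂ρ n) (U : Filter ℕ) (𝓝 (∫ x, f x ∂γ)) := by
      intro f
      exact Tendsto.congr (fun n => (hρint f n).symm) (h2' f)
    set c' : ℕ → ℝ := fun n => (c n)⁻¹ with hc'def
    set e : ℕ → ℝ := fun n => -(d n / c n) with hedef
    have h1ρ : ∀ f : ℝ →ᵇ ℝ,
        Tendsto (fun n => ∫ x, f (c' n * x + e n) ∂ρ n) (U : Filter ℕ) (𝓝 (∫ x, f x ∂μ)) := by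
      intro f
      apply Tendsto.congr' _ (h1' f)
      filter_upwards [hc'] with n hn
      have hint : ∫ x, f (c' n * x + e n) ∂ρ n
          = ∫ x, f (c' n * (c n * x + d n) + e n) ∂ν n :=
        integral_map (by fun_prop : Measurable fun x => c n * x + d n).aemeasurable
          ((affComp f (c' n) (e n)).continuous.measurable.aestronglyMeasurable)
      rw [hint]
      congr 1
      funext xx
      congr 1
      have hcn : c n ≠ 0 := ne_of_gt hn
      field_simp [hc'def, hedef]
      simp only [hc'def, hedef]
      field_simp
      ring
    have hc'0 : Tendsto c' (U : Filter ℕ) (𝓝 0) := tendsto_inv_atTop_zero.comp hcat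
    obtain ⟨z, hz⟩ := ereal_lim_exists (U := U) e
    induction z with
    | bot =>
      exfalso
      have hz' : Tendsto e (U : Filter ℕ) atBot := by
        rw [tendsto_atBot]
        intro b
        have := EReal.tendsto_nhds_bot_iff_real.mp hz b
        filter_upwards [this] with n hn
        exact le_of_lt (by exact_mod_cast hn)
      exact escape ρ γ μ c' e h2ρ h1ρ hc'0 (tendsto_abs_atBot_atTop.comp hz')
    | top =>
      exfalso
      have hz' : Tendsto e (U : Filter ℕ) atTop := by
        rw [tendsto_atTop]
        intro b
        have := EReal.tendsto_nhds_top_iff_real.mp hz b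
        filter_upwards [this] with n hn
        exact le_of_lt (by exact_mod_cast hn)
      exact escape ρ γ μ c' e h2ρ h1ρ hc'0 (tendsto_abs_atTop_atTop.comp hz')
    | coe β =>
      left
      have hβ : Tendsto e (U : Filter ℕ) (𝓝 β) := EReal.tendsto_coe.mp hz
      have := conv ρ γ μ c' e h2ρ h1ρ hc'0 hβ
      refine ⟨β, ?_⟩
      rw [this]
      have : (fun x : ℝ => 0 * x + β) = fun _ : ℝ => β := by funext xx; ring
      rw [this, MeasureTheory.Measure.map_const, measure_univ, one_smul]
  | coe α =>
    have hcα : Tendsto c (U : Filter ℕ) (𝓝 α) := EReal.tendsto_coe.mp hx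
    have hα : 0 ≤ α := ge_of_tendsto hcα (hc'.mono fun n h => h.le)
    induction y with
    | bot =>
      exfalso
      have hy' : Tendsto d (U : Filter ℕ) atBot := by
        rw [tendsto_atBot]
        intro b
        have := EReal.tendsto_nhds_bot_iff_real.mp hy b
        filter_upwards [this] with n hn
        exact le_of_lt (by exact_mod_cast hn)
      exact escape ν μ γ c d h1' h2' hcα (tendsto_abs_atBot_atTop.comp hy')
    | top =>
      exfalso
      have hy' : Tendsto d (U : Filter ℕ) atTop := by
        rw [tendsto_atTop]
        intro b
        have := EReal.tendsto_nhds_top_iff_real.mp hy b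
        filter_upwards [this] with n hn
        exact le_of_lt (by exact_mod_cast hn)
      exact escape ν μ γ c d h1' h2' hcα (tendsto_abs_atTop_atTop.comp hy')
    | coe β =>
      right
      exact ⟨α, β, hα, conv ν μ γ c d h1' h2' hcα (EReal.tendsto_coe.mp hy)⟩

/-- If property (D) holds, then no affine normalization `a_n S_n + b_n` can converge in
distribution to `N(0,1)`, even along a subsequence. -/
theorem stmt2 {Ω : Type*} [MeasurableSpace Ω] (P : Measure Ω) [IsProbabilityMeasure P]
    (X : ℤ → Ω → ℝ) (hXm : ∀ k : ℤ, Measurable (X k))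
    (hD : ∀ Q : Set ℕ, Q.Infinite →
      ∃ T ⊆ Q, T.Infinite ∧
        ∃ μ : Measure ℝ, IsProbabilityMeasure μ ∧
          (∀ c : ℝ, μ ≠ Measure.dirac c) ∧
          (∀ (m : ℝ) (v : ℝ≥0), μ ≠ gaussianReal m v) ∧
          (∀ f : BoundedContinuousFunction ℝ ℝ,
            Tendsto
              (fun n : ℕ =>
                ∫ ω, f ((∑ k ∈ Finset.Icc 1 n, X (k : ℤ) ω) / Real.sqrt n) ∂P)
              (atTop ⊓ 𝓟 T) (𝓝 (∫ x, f x ∂μ)))) :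
    ¬ ∃ (a b : ℕ → ℝ) (T' : Set ℕ), (∀ n, 0 < a n) ∧ T'.Infinite ∧
        ∀ f : BoundedContinuousFunction ℝ ℝ,
          Tendsto
            (fun n : ℕ =>
              ∫ ω, f (a n * (∑ k ∈ Finset.Icc 1 n, X (k : ℤ) ω) + b n) ∂P)
            (atTop ⊓ 𝓟 T') (𝓝 (∫ x, f x ∂(gaussianReal 0 1))) := by
  rintro ⟨a, b, T', ha, hT', hconv⟩
  obtain ⟨T, hTT', hTinf, μ, hμP, hμdirac, hμgauss, hμconv⟩ := hD T' hT'
  set F : Filter ℕ := atTop ⊓ 𝓟 T with hF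
  haveI hFne : F.NeBot := by
    rw [hF, Filter.inf_principal_neBot_iff]
    intro U hU
    obtain ⟨n, hn⟩ := mem_atTop_sets.mp hU
    obtain ⟨m, hmT, hmn⟩ := hTinf.exists_gt n
    exact ⟨m, hn m hmn.le, hmT⟩
  have hFle : F ≤ atTop ⊓ 𝓟 T' := inf_le_inf_left _ (principal_mono.mpr hTT')
  have hFatTop : F ≤ atTop := inf_le_left
  set S : ℕ → Ω → ℝ := fun n ω => ∑ k ∈ Finset.Icc 1 n, X (k : ℤ) ω with hS
  have hSm : ∀ n, Measurable (S n) := fun n => Finset.measurable_sum _ (fun k _ => hXm k)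
  set Z : ℕ → Ω → ℝ := fun n ω => S n ω / Real.sqrt n with hZ
  have hZm : ∀ n, Measurable (Z n) := fun n => (hSm n).div_const _
  set ν : ℕ → Measure ℝ := fun n => P.map (Z n) with hν
  haveI : ∀ n, IsProbabilityMeasure (ν n) := fun n =>
    Measure.isProbabilityMeasure_map (hZm n).aemeasurable
  haveI : IsProbabilityMeasure μ := hμP
  set c : ℕ → ℝ := fun n => a n * Real.sqrt n with hcdef
  set d : ℕ → ℝ := fun n => b n with hddef
  have hev1 : ∀ᶠ n in F, 1 ≤ n := (eventually_ge_atTop 1).filter_mono hFatTop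
  have hcpos : ∀ᶠ n in F, 0 < c n := by
    filter_upwards [hev1] with n hn
    exact mul_pos (ha n) (Real.sqrt_pos.mpr (by exact_mod_cast hn))
  have h1 : ∀ f : ℝ →ᵇ ℝ, Tendsto (fun n => ∫ x, f x ∂ν n) F (𝓝 (∫ x, f x ∂μ)) := by
    intro f
    apply Tendsto.congr _ (hμconv f)
    intro n
    exact (integral_map (hZm n).aemeasurable f.continuous.measurable.aestronglyMeasurable).symm
  have h2 : ∀ f : ℝ →ᵇ ℝ, Tendsto (fun n => ∫ x, f (c n * x + d n) ∂ν n) F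
      (𝓝 (∫ x, f x ∂(gaussianReal 0 1))) := by
    intro f
    apply Tendsto.congr' _ ((hconv f).mono_left hFle)
    filter_upwards [hev1] with n hn
    have hsq : Real.sqrt n ≠ 0 := ne_of_gt (Real.sqrt_pos.mpr (by exact_mod_cast hn))
    have hmapeq : ∫ x, f (c n * x + d n) ∂ν n = ∫ ω, f (c n * Z n ω + d n) ∂P :=
      integral_map (hZm n).aemeasurable
        ((affComp f (c n) (d n)).continuous.measurable.aestronglyMeasurable)
    rw [hmapeq]
    congr 1
    funext ω
    congr 1
    rw [hcdef, hZ]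
    field_simp
    ring
  obtain h | ⟨α, β, hα0, hmap⟩ := key ν μ (gaussianReal 0 1) c d hcpos h1 h2
  · obtain ⟨e, he⟩ := h
    exact hμdirac e he
  · rcases eq_or_lt_of_le hα0 with hα | hα
    · rw [← hα] at hmap
      have h0 : (fun x : ℝ => 0 * x + β) = fun _ : ℝ => β := by funext xx; ring
      rw [h0, MeasureTheory.Measure.map_const, measure_univ, one_smul] at hmap
      have hEval := congrArg (fun m : Measure ℝ => m {β}) hmap
      have hg0 : (gaussianReal 0 1) {β} = 0 :=
        gaussianReal_absolutelyContinuous 0 one_ne_zero Real.volume_singleton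
      have hd1 : Measure.dirac β ({β} : Set ℝ) = 1 := by
        simp [Measure.dirac_apply_of_mem]
      rw [hg0, hd1] at hEval
      exact zero_ne_one hEval
    · apply hμgauss (α⁻¹ * 0 + (-β / α)) (⟨α⁻¹ ^ 2, sq_nonneg _⟩ * 1)
      have hfm : Measurable (fun x : ℝ => α * x + β) := by fun_prop
      have hgm : Measurable (fun y : ℝ => α⁻¹ * y + (-β / α)) := by fun_prop
      have hcomp : μ = (gaussianReal 0 1).map (fun y => α⁻¹ * y + (-β / α)) := by
        rw [hmap, Measure.map_map hgm hfm]
        have hid : ((fun y : ℝ => α⁻¹ * y + (-β / α)) ∘ (fun x => α * x + β)) = id := by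
          funext xx
          simp only [Function.comp_apply, id_eq]
          field_simp
          ring
        rw [hid, Measure.map_id]
      rw [hcomp]
      have hdecomp : (fun y : ℝ => α⁻¹ * y + (-β / α))
          = ((· + (-β / α)) ∘ (fun y : ℝ => α⁻¹ * y)) := rfl
      rw [hdecomp, ← Measure.map_map (by fun_prop) (by fun_prop)]
      have hmul : (gaussianReal 0 1).map (fun y : ℝ => α⁻¹ * y)
          = gaussianReal (α⁻¹ * 0) (⟨α⁻¹ ^ 2, sq_nonneg _⟩ * 1) :=
        gaussianReal_map_const_mul α⁻¹
      rw [hmul, gaussianReal_map_add_const]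
end

section
/- Let L be a fixed even integer with L ≥ 6, and let V = (V_0, V_1, …, V_{L−1}) be a random vector with law ν. Then: (i) for each k ∈ {0,…,L−1}, P(V_k = −1) = P(V_k = 1) = 1/2; (ii) V is (L−1)-tuplewise independent; (iii) −V has law ν; (iv) for every permutation σ of {0,…,L−1}, the random vector (V_{σ(0)}, …, V_{σ(L−1)}) has law ν; (v) ∏_{ℓ=0}^{L−1} V_ℓ = −1 almost surely, and hence for each j ∈ {0,…,L−1}, V_j = −∏_{ℓ≠j} V_ℓ almost surely. -/
open MeasureTheory ProbabilityTheory Filter Topology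
open scoped ENNReal NNReal

noncomputable section Aux
open Finset
open scoped Classical

def SgnF : Finset ℝ := {-1, 1}

lemma sgnF_card : SgnF.card = 2 := by
  rw [SgnF, Finset.card_insert_of_notMem (by norm_num), Finset.card_singleton]

lemma mem_sgnF {a : ℝ} : a ∈ SgnF ↔ a = -1 ∨ a = 1 := by simp [SgnF]

def UpsF (L : ℕ) : Finset (Fin L → ℝ) :=
  (Fintype.piFinset fun _ : Fin L => SgnF).filter fun x => ∏ i, x i = -1

lemma mem_upsF {L : ℕ} {x : Fin L → ℝ} :
    x ∈ UpsF L ↔ (∀ i, x i = -1 ∨ x i = 1) ∧ ∏ i, x i = -1 := by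
  simp [UpsF, Fintype.mem_piFinset, mem_sgnF]

lemma coe_upsF (L : ℕ) : Upsilon L = ↑(UpsF L) := by
  ext x
  simp only [Upsilon, Set.mem_setOf_eq, Finset.mem_coe, mem_upsF, or_comm]

lemma prod_sign {L : ℕ} {x : Fin L → ℝ} (hx : ∀ i, x i = -1 ∨ x i = 1) :
    ∏ i, x i = -1 ∨ ∏ i, x i = 1 := by
  have h : (∏ i, x i) * ∏ i, x i = 1 := by
    rw [← Finset.prod_mul_distrib]
    refine Finset.prod_eq_one fun i _ => ?_
    rcases hx i with h | h <;> rw [h] <;> norm_num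
  rcases mul_self_eq_one_iff.mp h with h | h
  · right; exact h
  · left; exact h

lemma card_upsF_filter (L : ℕ) (T : Finset (Fin L)) (hT : T.card < L) (A : Fin L → Set ℝ) :
    ((UpsF L).filter fun x => ∀ i ∈ T, x i ∈ A i).card
      = 2 ^ (L - 1 - T.card) * ∏ i ∈ T, (SgnF.filter (· ∈ A i)).card := by
  classical
  have hTne : T ≠ Finset.univ := by
    intro h; rw [h, Finset.card_univ, Fintype.card_fin] at hT; omega
  obtain ⟨j₀, hj₀⟩ : ∃ j, j ∉ T := by
    by_contra h; push_neg at h; exact hTne (Finset.eq_univ_iff_forall.mpr h)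
  have hQcard : ((Fintype.piFinset fun _ : Fin L => SgnF).filter
        fun x => ∀ i ∈ T, x i ∈ A i).card
      = (∏ i ∈ T, (SgnF.filter (· ∈ A i)).card) * 2 ^ (L - T.card) := by
    have heq : ((Fintype.piFinset fun _ : Fin L => SgnF).filter fun x => ∀ i ∈ T, x i ∈ A i)
        = Fintype.piFinset fun i => if i ∈ T then SgnF.filter (· ∈ A i) else SgnF := by
      ext x
      simp only [Finset.mem_filter, Fintype.mem_piFinset]
      constructor
      · rintro ⟨h1, h2⟩ i
        by_cases hi : i ∈ T
        · rw [if_pos hi, Finset.mem_filter]; exact ⟨h1 i, h2 i hi⟩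
        · rw [if_neg hi]; exact h1 i
      · intro h
        constructor
        · intro i; by_cases hi : i ∈ T
          · have := h i; rw [if_pos hi, Finset.mem_filter] at this; exact this.1
          · have := h i; rwa [if_neg hi] at this
        · intro i hi; have := h i; rw [if_pos hi, Finset.mem_filter] at this; exact this.2
    rw [heq, Fintype.card_piFinset]
    rw [← Finset.prod_mul_prod_compl T]
    congr 1
    · exact Finset.prod_congr rfl fun i hi => by rw [if_pos hi]
    · rw [Finset.prod_congr rfl fun i hi => by
        rw [if_neg (Finset.mem_compl.mp hi), sgnF_card]]
      rw [Finset.prod_const, Finset.card_compl, Fintype.card_fin]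
  have hmem_sign : ∀ x ∈ (Fintype.piFinset fun _ : Fin L => SgnF).filter
      (fun x => ∀ i ∈ T, x i ∈ A i), (∏ i, x i = -1) ∨ (∏ i, x i = 1) := by
    intro x hx
    rw [Finset.mem_filter] at hx
    exact prod_sign fun i => mem_sgnF.mp (Fintype.mem_piFinset.mp hx.1 i)
  have hflip : ∀ x ∈ (Fintype.piFinset fun _ : Fin L => SgnF).filter
        (fun x => ∀ i ∈ T, x i ∈ A i),
      Function.update x j₀ (-x j₀) ∈ (Fintype.piFinset fun _ : Fin L => SgnF).filter
        (fun x => ∀ i ∈ T, x i ∈ A i) ∧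
      ∏ i, Function.update x j₀ (-x j₀) i = -∏ i, x i := by
    intro x hx
    rw [Finset.mem_filter] at hx
    obtain ⟨hx1, hx2⟩ := hx
    have hmem : ∀ i, x i ∈ SgnF := Fintype.mem_piFinset.mp hx1
    refine ⟨Finset.mem_filter.mpr ⟨Fintype.mem_piFinset.mpr fun i => ?_, fun i hi => ?_⟩, ?_⟩
    · by_cases hij : i = j₀
      · subst hij; rw [Function.update_self]
        rcases mem_sgnF.mp (hmem i) with h | h <;> rw [h] <;> simp [mem_sgnF]
      · rw [Function.update_of_ne hij]; exact hmem i
    · rw [Function.update_of_ne (by rintro rfl; exact hj₀ hi)]; exact hx2 i hi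
    · rw [Finset.prod_update_of_mem (Finset.mem_univ j₀), Finset.sdiff_singleton_eq_erase,
        ← Finset.mul_prod_erase Finset.univ x (Finset.mem_univ j₀)]
      ring
  have hinv : ∀ x : Fin L → ℝ,
      Function.update (Function.update x j₀ (-x j₀)) j₀
        (-(Function.update x j₀ (-x j₀)) j₀) = x := by
    intro x
    simp [Function.update_idem, Function.update_self, Function.update_eq_self]
  have hbij : (((Fintype.piFinset fun _ : Fin L => SgnF).filter
          (fun x => ∀ i ∈ T, x i ∈ A i)).filter fun x => ∏ i, x i = -1).card
      = (((Fintype.piFinset fun _ : Fin L => SgnF).filter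
          (fun x => ∀ i ∈ T, x i ∈ A i)).filter fun x => ∏ i, x i = 1).card := by
    refine Finset.card_bij' (fun x _ => Function.update x j₀ (-x j₀))
      (fun x _ => Function.update x j₀ (-x j₀)) ?_ ?_ ?_ ?_
    · intro a ha
      rw [Finset.mem_filter] at ha ⊢
      obtain ⟨hm, hp⟩ := hflip a ha.1
      exact ⟨hm, by rw [hp, ha.2]; try norm_num⟩
    · intro a ha
      rw [Finset.mem_filter] at ha ⊢
      obtain ⟨hm, hp⟩ := hflip a ha.1
      exact ⟨hm, by rw [hp, ha.2]; try norm_num⟩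
    · intro a _; exact hinv a
    · intro a _; exact hinv a
  have hsplit : (((Fintype.piFinset fun _ : Fin L => SgnF).filter
          (fun x => ∀ i ∈ T, x i ∈ A i)).filter fun x => ∏ i, x i = -1).card
      + (((Fintype.piFinset fun _ : Fin L => SgnF).filter
          (fun x => ∀ i ∈ T, x i ∈ A i)).filter fun x => ∏ i, x i = 1).card
      = ((Fintype.piFinset fun _ : Fin L => SgnF).filter
          fun x => ∀ i ∈ T, x i ∈ A i).card := by
    have h := Finset.card_filter_add_card_filter_not
      (s := (Fintype.piFinset fun _ : Fin L => SgnF).filter fun x => ∀ i ∈ T, x i ∈ A i)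
      (p := fun x : Fin L → ℝ => ∏ i, x i = -1)
    rw [show (((Fintype.piFinset fun _ : Fin L => SgnF).filter
            (fun x => ∀ i ∈ T, x i ∈ A i)).filter fun a => ¬ ∏ i, a i = -1)
        = (((Fintype.piFinset fun _ : Fin L => SgnF).filter
            (fun x => ∀ i ∈ T, x i ∈ A i)).filter fun x => ∏ i, x i = 1) from
      Finset.filter_congr fun x hx =>
        ⟨fun h' => (hmem_sign x hx).resolve_left h',
         fun h1 hn => by rw [h1] at hn; norm_num at hn⟩] at h
    exact h
  have key : ((UpsF L).filter fun x => ∀ i ∈ T, x i ∈ A i)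
      = ((Fintype.piFinset fun _ : Fin L => SgnF).filter
          (fun x => ∀ i ∈ T, x i ∈ A i)).filter fun x => ∏ i, x i = -1 := by
    ext x
    simp only [Finset.mem_filter, mem_upsF, Fintype.mem_piFinset, mem_sgnF]
    tauto
  have hLk : L - T.card = (L - 1 - T.card) + 1 := by clear * - hT; omega
  have h2N : ((UpsF L).filter fun x => ∀ i ∈ T, x i ∈ A i).card * 2
      = (2 ^ (L - 1 - T.card) * ∏ i ∈ T, (SgnF.filter (· ∈ A i)).card) * 2 := by
    rw [key, mul_two]
    nth_rewrite 2 [hbij]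
    rw [hsplit, hQcard, hLk, pow_succ]
    ring
  exact Nat.eq_of_mul_eq_mul_right two_pos h2N

lemma measSet_pi (L : ℕ) (T : Finset (Fin L)) (A : Fin L → Set ℝ)
    (hA : ∀ i ∈ T, MeasurableSet (A i)) :
    MeasurableSet {x : Fin L → ℝ | ∀ i ∈ T, x i ∈ A i} := by
  have heq : {x : Fin L → ℝ | ∀ i ∈ T, x i ∈ A i} = ⋂ i ∈ T, (fun x => x i) ⁻¹' A i := by
    ext x; simp
  rw [heq]
  exact MeasurableSet.biInter T.countable_toSet fun i hi =>
    measurable_pi_apply i (hA i hi)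

lemma nuL_apply_meas (L : ℕ) {A : Set (Fin L → ℝ)} (hA : MeasurableSet A) :
    nuL L A = ((2 : ℝ≥0∞) ^ (L - 1))⁻¹ * ((UpsF L).filter (· ∈ A)).card := by
  rw [nuL, Measure.smul_apply, smul_eq_mul, Measure.restrict_apply hA, coe_upsF]
  congr 1
  rw [show (A ∩ ↑(UpsF L)) = ↑((UpsF L).filter (· ∈ A)) by
    ext x; simp [Finset.mem_filter, and_comm], Measure.count_apply_finset]

lemma nuL_apply_pred (L : ℕ) (p : (Fin L → ℝ) → Prop)
    (hA : MeasurableSet {x | p x}) :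
    nuL L {x | p x} = ((2 : ℝ≥0∞) ^ (L - 1))⁻¹ * ((UpsF L).filter p).card := by
  rw [nuL, Measure.smul_apply, smul_eq_mul, Measure.restrict_apply hA, coe_upsF]
  congr 1
  rw [show ({x | p x} ∩ ↑(UpsF L)) = ↑((UpsF L).filter p) by
    ext x; simp [Finset.mem_filter, and_comm], Measure.count_apply_finset]

lemma nuL_pi (L : ℕ) (T : Finset (Fin L)) (hT : T.card < L) (A : Fin L → Set ℝ)
    (hA : ∀ i ∈ T, MeasurableSet (A i)) :
    nuL L {x | ∀ i ∈ T, x i ∈ A i}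
      = ∏ i ∈ T, (2⁻¹ * ((SgnF.filter (· ∈ A i)).card : ℝ≥0∞)) := by
  have hAm := measSet_pi L T A hA
  rw [nuL, Measure.smul_apply, smul_eq_mul, Measure.restrict_apply hAm, coe_upsF]
  rw [show ({x : Fin L → ℝ | ∀ i ∈ T, x i ∈ A i} ∩ ↑(UpsF L))
      = ↑((UpsF L).filter fun x => ∀ i ∈ T, x i ∈ A i) by
    ext x; simp [Finset.mem_filter, and_comm]]
  rw [Measure.count_apply_finset, card_upsF_filter L T hT A]
  push_cast
  rw [Finset.prod_mul_distrib, Finset.prod_const]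
  have h1 : ((2 : ℝ≥0∞) ^ (L - 1 - T.card)) ≠ 0 := pow_ne_zero _ two_ne_zero
  have h2 : ((2 : ℝ≥0∞) ^ (L - 1 - T.card)) ≠ ⊤ := by
    exact ENNReal.pow_ne_top (by norm_num)
  have h3 : ((2 : ℝ≥0∞) ^ T.card) ≠ 0 := pow_ne_zero _ two_ne_zero
  have hsplitpow : (2 : ℝ≥0∞) ^ (L - 1) = 2 ^ (L - 1 - T.card) * 2 ^ T.card := by
    rw [← pow_add]; congr 1; omega
  rw [hsplitpow, ENNReal.mul_inv (Or.inl h1) (Or.inr h3), mul_mul_mul_comm,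
    ENNReal.inv_mul_cancel h1 h2, one_mul, ENNReal.inv_pow]

lemma nuL_map_eq (L : ℕ) {f : (Fin L → ℝ) → (Fin L → ℝ)} (hf : Measurable f)
    (g : (Fin L → ℝ) → (Fin L → ℝ))
    (hfg : ∀ x ∈ UpsF L, g (f x) = x) (hgf : ∀ x ∈ UpsF L, f (g x) = x)
    (hfU : ∀ x ∈ UpsF L, f x ∈ UpsF L) (hgU : ∀ x ∈ UpsF L, g x ∈ UpsF L) :
    Measure.map f (nuL L) = nuL L := by
  refine Measure.ext fun A hA => ?_
  rw [Measure.map_apply hf hA, nuL_apply_meas L (hf hA), nuL_apply_meas L hA]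
  congr 2
  refine Finset.card_bij' (fun x _ => f x) (fun y _ => g y) ?_ ?_ ?_ ?_
  · intro a ha
    rw [Finset.mem_filter] at ha ⊢
    exact ⟨hfU a ha.1, ha.2⟩
  · intro b hb
    rw [Finset.mem_filter] at hb ⊢
    refine ⟨hgU b hb.1, ?_⟩
    show g b ∈ f ⁻¹' A
    rw [Set.mem_preimage, hgf b hb.1]
    exact hb.2
  · intro a ha; exact hfg a (Finset.mem_filter.mp ha).1
  · intro b hb; exact hgf b (Finset.mem_filter.mp hb).1

lemma measProdSet (L : ℕ) : MeasurableSet {x : Fin L → ℝ | ∏ i, x i = -1} := by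
  have hm : Measurable fun x : Fin L → ℝ => ∏ i, x i :=
    Finset.measurable_prod Finset.univ fun i _ => measurable_pi_apply i
  exact hm (measurableSet_singleton (-1))

lemma measCoordSet (L : ℕ) (j : Fin L) :
    MeasurableSet {x : Fin L → ℝ | x j = -∏ ℓ ∈ Finset.univ.erase j, x ℓ} := by
  have hm : Measurable fun x : Fin L → ℝ => x j + ∏ ℓ ∈ Finset.univ.erase j, x ℓ :=
    (measurable_pi_apply j).add
      (Finset.measurable_prod _ fun i _ => measurable_pi_apply i)
  have heq : {x : Fin L → ℝ | x j = -∏ ℓ ∈ Finset.univ.erase j, x ℓ}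
      = (fun x : Fin L → ℝ => x j + ∏ ℓ ∈ Finset.univ.erase j, x ℓ) ⁻¹' {0} := by
    ext x
    simp only [Set.mem_setOf_eq, Set.mem_preimage, Set.mem_singleton_iff]
    constructor
    · intro h; rw [h]; ring
    · intro h; linarith
  rw [heq]
  exact hm (measurableSet_singleton 0)

lemma nuL_inter_empty (L : ℕ) {A : Set (Fin L → ℝ)} (hA : MeasurableSet A)
    (h : ∀ x ∈ UpsF L, x ∉ A) : nuL L A = 0 := by
  rw [nuL, Measure.smul_apply, smul_eq_mul, Measure.restrict_apply hA, coe_upsF]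
  rw [show (A ∩ ↑(UpsF L)) = (∅ : Set (Fin L → ℝ)) by
    ext x
    simp only [Set.mem_inter_iff, Finset.mem_coe, Set.mem_empty_iff_false, iff_false, not_and]
    intro hx hx2
    exact h x hx2 hx]
  simp

lemma upsF_prod {L : ℕ} {x : Fin L → ℝ} (hx : x ∈ UpsF L) : ∏ i, x i = -1 :=
  (mem_upsF.mp hx).2

lemma upsF_coord {L : ℕ} (j : Fin L) {x : Fin L → ℝ} (hx : x ∈ UpsF L) :
    x j = -∏ ℓ ∈ Finset.univ.erase j, x ℓ := by
  obtain ⟨hs, hp⟩ := mem_upsF.mp hx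
  have h1 : x j * ∏ ℓ ∈ Finset.univ.erase j, x ℓ = -1 := by
    rw [Finset.mul_prod_erase Finset.univ x (Finset.mem_univ j)]
    exact hp
  rcases hs j with h | h <;> rw [h] at h1 ⊢ <;> nlinarith [h1]

lemma upsF_neg_mem {L : ℕ} (hLeven : Even L) {x : Fin L → ℝ} (hx : x ∈ UpsF L) :
    -x ∈ UpsF L := by
  obtain ⟨hs, hp⟩ := mem_upsF.mp hx
  refine mem_upsF.mpr ⟨fun i => ?_, ?_⟩
  · rcases hs i with h | h <;> simp [h]
  · have h1 : ∏ i, (-x) i = (-1 : ℝ) ^ L * ∏ i, x i := by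
      calc ∏ i, (-x) i = ∏ i : Fin L, (-1 : ℝ) * x i := by
            refine Finset.prod_congr rfl fun i _ => ?_
            simp
        _ = (∏ _i : Fin L, (-1 : ℝ)) * ∏ i, x i := Finset.prod_mul_distrib
        _ = (-1 : ℝ) ^ L * ∏ i, x i := by
            rw [Finset.prod_const, Finset.card_univ, Fintype.card_fin]
    rw [h1, hLeven.neg_one_pow, one_mul, hp]

lemma upsF_perm_mem {L : ℕ} (σ : Equiv.Perm (Fin L)) {x : Fin L → ℝ} (hx : x ∈ UpsF L) :
    x ∘ σ ∈ UpsF L := by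
  obtain ⟨hs, hp⟩ := mem_upsF.mp hx
  refine mem_upsF.mpr ⟨fun i => hs (σ i), ?_⟩
  rw [show ∏ i, (x ∘ σ) i = ∏ i, x (σ i) from rfl, Equiv.prod_comp σ x]
  exact hp

lemma card_sgn_singleton (c : ℝ) (hc : c = -1 ∨ c = 1) :
    (SgnF.filter (· ∈ ({c} : Set ℝ))).card = 1 := by
  rw [show SgnF.filter (· ∈ ({c} : Set ℝ)) = {c} from ?_]
  · exact Finset.card_singleton c
  · ext y
    simp only [Finset.mem_filter, mem_sgnF, Set.mem_singleton_iff, Finset.mem_singleton]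
    constructor
    · rintro ⟨_, h2⟩; exact h2
    · rintro rfl
      exact ⟨hc, rfl⟩

end Aux


/-- Remark 2.5: properties of a random vector `V` with law `ν`. -/
theorem stmt6 (L : ℕ) (hLeven : Even L) (hL6 : 6 ≤ L)
    {Ω : Type*} [MeasurableSpace Ω] (P : Measure Ω) [IsProbabilityMeasure P]
    (V : Ω → Fin L → ℝ) (hVmeas : Measurable V)
    (hVlaw : Measure.map V P = nuL L) :
    -- (i)
    (∀ k : Fin L, P {ω | V ω k = -1} = 1/2 ∧ P {ω | V ω k = 1} = 1/2) ∧
    -- (ii)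
    TuplewiseIndep P (L - 1) (fun k ω => V ω k) ∧
    -- (iii)
    Measure.map (fun ω => -(V ω)) P = nuL L ∧
    -- (iv)
    (∀ σ : Equiv.Perm (Fin L), Measure.map (fun ω => V ω ∘ σ) P = nuL L) ∧
    -- (v)
    (∀ᵐ ω ∂P, (∏ ℓ, V ω ℓ) = -1) ∧
    (∀ j : Fin L, ∀ᵐ ω ∂P, V ω j = -∏ ℓ ∈ Finset.univ.erase j, V ω ℓ) := by

  classical
  have hLpos : 0 < L := by omega
  have hmap : ∀ {A : Set (Fin L → ℝ)}, MeasurableSet A → P (V ⁻¹' A) = nuL L A := by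
    intro A hA
    rw [← hVlaw, Measure.map_apply hVmeas hA]
  have hsingle : ∀ (k : Fin L) (c : ℝ), c = -1 ∨ c = 1 → P {ω | V ω k = c} = 1/2 := by
    intro k c hc
    have hms : MeasurableSet {x : Fin L → ℝ |
        ∀ i ∈ ({k} : Finset (Fin L)), x i ∈ ({c} : Set ℝ)} :=
      measSet_pi L {k} _ fun i _ => measurableSet_singleton c
    have hseteq : {ω | V ω k = c}
        = V ⁻¹' {x : Fin L → ℝ | ∀ i ∈ ({k} : Finset (Fin L)), x i ∈ ({c} : Set ℝ)} := by
      ext ω; simp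
    rw [hseteq, hmap hms,
      nuL_pi L {k} (by rw [Finset.card_singleton]; omega) _
        (fun i _ => measurableSet_singleton c),
      Finset.prod_singleton]
    rw [show ∀ n : ℕ, n = 1 → (2 : ℝ≥0∞)⁻¹ * (n : ℝ≥0∞) = 1 / 2 from fun n hn => by
      rw [hn, Nat.cast_one, mul_one, one_div]]
    convert card_sgn_singleton c hc
  refine ⟨fun k => ⟨hsingle k (-1) (Or.inl rfl), hsingle k 1 (Or.inr rfl)⟩, ?_, ?_, ?_, ?_, ?_⟩
  · -- (ii) tuplewise independence
    intro S hS2 hSm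
    rw [iIndepFun_iff_measure_inter_preimage_eq_mul]
    intro T sets hsets
    have hT'lt : (T.image Subtype.val).card < L := by
      have h1 : (T.image Subtype.val).card = T.card :=
        Finset.card_image_of_injective T Subtype.val_injective
      have h2 : T.card ≤ S.card := by
        have := Finset.card_le_card (Finset.subset_univ T)
        rwa [Finset.card_univ, Fintype.card_coe] at this
      omega
    set A : Fin L → Set ℝ := fun i => if h : i ∈ S then sets ⟨i, h⟩ else Set.univ with hAdef
    have hAT : ∀ i : {i // i ∈ S}, A ↑i = sets i := by
      intro i
      rw [hAdef]
      dsimp only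
      rw [dif_pos i.2, Subtype.coe_eta]
    have hAmeas : ∀ i ∈ T.image Subtype.val, MeasurableSet (A i) := by
      intro i hi
      obtain ⟨a, ha, rfl⟩ := Finset.mem_image.mp hi
      rw [hAT a]
      exact hsets a ha
    have hset1 : (⋂ i ∈ T, (fun ω => V ω ↑i) ⁻¹' sets i)
        = V ⁻¹' {x : Fin L → ℝ | ∀ j ∈ T.image Subtype.val, x j ∈ A j} := by
      ext ω
      simp only [Set.mem_iInter, Set.mem_preimage, Set.mem_setOf_eq]
      constructor
      · intro h j hj
        obtain ⟨a, ha, rfl⟩ := Finset.mem_image.mp hj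
        rw [hAT a]
        exact h a ha
      · intro h i hi
        have := h ↑i (Finset.mem_image_of_mem _ hi)
        rwa [hAT i] at this
    have hms := measSet_pi L (T.image Subtype.val) A hAmeas
    rw [show (⋂ i ∈ T, (fun i : {i // i ∈ S} => fun ω => V ω ↑i) i ⁻¹' sets i)
        = (⋂ i ∈ T, (fun ω => V ω ↑i) ⁻¹' sets i) from rfl,
      hset1, hmap hms, nuL_pi L (T.image Subtype.val) hT'lt A hAmeas,
      Finset.prod_image fun a _ b _ h => Subtype.val_injective h]
    refine Finset.prod_congr rfl fun i hi => ?_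
    have hmsi : MeasurableSet {x : Fin L → ℝ |
        ∀ j ∈ ({(↑i : Fin L)} : Finset (Fin L)), x j ∈ A j} :=
      measSet_pi L {(↑i : Fin L)} A fun j hj => by
        rw [Finset.mem_singleton] at hj
        subst hj
        rw [hAT i]
        exact hsets i hi
    have hpre : ((fun ω => V ω ↑i) ⁻¹' sets i)
        = V ⁻¹' {x : Fin L → ℝ | ∀ j ∈ ({(↑i : Fin L)} : Finset (Fin L)), x j ∈ A j} := by
      ext ω
      simp [hAT i]
    rw [hpre, hmap hmsi,
      nuL_pi L {(↑i : Fin L)} (by rw [Finset.card_singleton]; omega) A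
        (fun j hj => by
          rw [Finset.mem_singleton] at hj
          subst hj
          rw [hAT i]
          exact hsets i hi),
      Finset.prod_singleton]
  · -- (iii) negation invariance
    have hcomp : (fun ω => -(V ω)) = (fun x : Fin L → ℝ => -x) ∘ V := rfl
    rw [hcomp, ← Measure.map_map measurable_neg hVmeas, hVlaw]
    exact nuL_map_eq L measurable_neg (fun x => -x) (fun x _ => neg_neg x)
      (fun x _ => neg_neg x) (fun x hx => upsF_neg_mem hLeven hx)
      (fun x hx => upsF_neg_mem hLeven hx)
  · -- (iv) permutation invariance
    intro σ
    have hmeasσ : Measurable fun x : Fin L → ℝ => x ∘ ⇑σ :=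
      measurable_pi_lambda _ fun i => measurable_pi_apply (σ i)
    have hcomp : (fun ω => V ω ∘ ⇑σ) = (fun x : Fin L → ℝ => x ∘ ⇑σ) ∘ V := rfl
    rw [hcomp, ← Measure.map_map hmeasσ hVmeas, hVlaw]
    refine nuL_map_eq L hmeasσ (fun x => x ∘ ⇑σ.symm) ?_ ?_
      (fun x hx => upsF_perm_mem σ hx) (fun x hx => upsF_perm_mem σ.symm hx)
    · intro x _
      funext j
      simp
    · intro x _
      funext j
      simp
  · -- (v) first part
    rw [ae_iff]
    have hseteq : {ω | ¬ (∏ ℓ, V ω ℓ) = -1}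
        = V ⁻¹' {x : Fin L → ℝ | ∏ i, x i = -1}ᶜ := rfl
    rw [hseteq, hmap (measProdSet L).compl]
    exact nuL_inter_empty L (measProdSet L).compl fun x hx h => h (upsF_prod hx)
  · -- (v) second part
    intro j
    rw [ae_iff]
    have hseteq : {ω | ¬ V ω j = -∏ ℓ ∈ Finset.univ.erase j, V ω ℓ}
        = V ⁻¹' {x : Fin L → ℝ | x j = -∏ ℓ ∈ Finset.univ.erase j, x ℓ}ᶜ := rfl
    rw [hseteq, hmap (measCoordSet L j).compl]
    exact nuL_inter_empty L (measCoordSet L j).compl fun x hx h => h (upsF_coord j hx)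
end

section
/- Let L be a fixed even integer with L ≥ 6, let n ≥ 1, and let W = (W_0, …, W_{n−1}) be a random vector whose law on ℝ^n satisfies Condition H(n). Define Y = φ_n(W) = (Y_0, …, Y_{n−1}). Then: (i) E(Σ_{k=0}^{n−1} Y_k) = E|Σ_{k=0}^{n−1} W_k| ≥ (1/2)·n^{1/2}; (ii) Y_0, Y_1, …, Y_{n−1} all have the same distribution; (iii) for each k ∈ {0,…,n−1}, E Y_k = (1/n)·E|Σ_{i=0}^{n−1} W_i|. -/
open MeasureTheory ProbabilityTheory Filter Topology
open scoped ENNReal NNReal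

noncomputable section AuxLemmas

open Finset

lemma aux_sqrt3_pos : (0:ℝ) < Real.sqrt 3 := Real.sqrt_pos.2 (by norm_num)
lemma aux_sq_sqrt3 : Real.sqrt 3 ^ 2 = 3 := Real.sq_sqrt (by norm_num)

lemma aux_lam_pow (m : ℕ) : ∫ t, t^m ∂lambdaUnps3
    = (2 * Real.sqrt 3)⁻¹ * ((Real.sqrt 3 ^ (m+1) - (-Real.sqrt 3)^(m+1)) / (m+1)) := by
  rw [lambdaUnps3, integral_smul_measure]
  have h1 : ((ENNReal.ofReal (2 * Real.sqrt 3))⁻¹).toReal = (2 * Real.sqrt 3)⁻¹ := by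
    rw [ENNReal.toReal_inv, ENNReal.toReal_ofReal (by positivity)]
  rw [h1, smul_eq_mul]
  congr 1
  rw [MeasureTheory.integral_Icc_eq_integral_Ioc,
    ← intervalIntegral.integral_of_le (by linarith [aux_sqrt3_pos]), integral_pow]

lemma aux_lam_pow1 : ∫ t, t^1 ∂lambdaUnps3 = 0 := by
  rw [aux_lam_pow]; norm_num
lemma aux_lam_pow2 : ∫ t, t^2 ∂lambdaUnps3 = 1 := by
  have h := aux_sq_sqrt3; have h0 := aux_sqrt3_pos
  have h3 : Real.sqrt 3 ^ 3 = 3 * Real.sqrt 3 := by rw [pow_succ, h]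
  rw [aux_lam_pow]
  have e : (-Real.sqrt 3)^(2+1) = -(Real.sqrt 3^3) := by ring
  rw [e, show Real.sqrt 3 ^ (2+1) = Real.sqrt 3 ^ 3 from rfl, h3]
  field_simp
  ring
lemma aux_lam_pow3 : ∫ t, t^3 ∂lambdaUnps3 = 0 := by
  rw [aux_lam_pow]; ring_nf
lemma aux_lam_pow4 : ∫ t, t^4 ∂lambdaUnps3 = 9/5 := by
  have h := aux_sq_sqrt3; have h0 := aux_sqrt3_pos
  have h4 : Real.sqrt 3 ^ 4 = 9 := by nlinarith [h]
  have h5 : Real.sqrt 3 ^ 5 = 9 * Real.sqrt 3 := by rw [pow_succ, h4]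
  rw [aux_lam_pow]
  have e : (-Real.sqrt 3)^(4+1) = -(Real.sqrt 3^5) := by ring
  rw [e, show Real.sqrt 3 ^ (4+1) = Real.sqrt 3 ^ 5 from rfl, h5]
  field_simp
  ring

lemma aux_lam_ae : ∀ᵐ t ∂lambdaUnps3, |t| ≤ Real.sqrt 3 := by
  rw [lambdaUnps3]
  refine Measure.ae_smul_measure ?_ _
  filter_upwards [ae_restrict_mem measurableSet_Icc] with t ht
  rw [abs_le]; exact ⟨ht.1, ht.2⟩

variable {n : ℕ} {μ : Measure (Fin n → ℝ)}

lemma aux_coord_pow (hmar : ∀ k : Fin n, Measure.map (fun x : Fin n → ℝ => x k) μ = lambdaUnps3)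
    (k : Fin n) (m : ℕ) : ∫ x, (x k)^m ∂μ = ∫ t, t^m ∂lambdaUnps3 := by
  rw [← hmar k]
  exact (integral_map (μ := μ) (φ := fun x : Fin n → ℝ => x k) (f := fun t : ℝ => t ^ m)
    (measurable_pi_apply k).aemeasurable
    (Measurable.aestronglyMeasurable (by fun_prop))).symm

lemma aux_ae_coord_bound
    (hmar : ∀ k : Fin n, Measure.map (fun x : Fin n → ℝ => x k) μ = lambdaUnps3) :
    ∀ᵐ x ∂μ, ∀ k, |x k| ≤ Real.sqrt 3 := by
  rw [MeasureTheory.ae_all_iff]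
  intro k
  have h : ∀ᵐ t ∂(Measure.map (fun x : Fin n → ℝ => x k) μ), |t| ≤ Real.sqrt 3 := by
    rw [hmar k]; exact aux_lam_ae
  exact ae_of_ae_map (measurable_pi_apply k).aemeasurable h

lemma aux_indep_pair {m : ℕ} (hm : 5 ≤ m)
    (htup : TuplewiseIndep μ m (fun k (x : Fin n → ℝ) => x k))
    {a b : Fin n} (hab : a ≠ b) :
    IndepFun (fun x : Fin n → ℝ => x a) (fun x => x b) μ := by
  have h := htup {a, b} (by rw [Finset.card_pair hab]) (by rw [Finset.card_pair hab]; omega)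
  exact h.indepFun (i := ⟨a, by simp⟩) (j := ⟨b, by simp⟩) (by simp [hab])

lemma aux_indep_triple {m : ℕ} (hm : 5 ≤ m)
    (htup : TuplewiseIndep μ m (fun k (x : Fin n → ℝ) => x k))
    {a b c : Fin n} (hab : a ≠ b) (hac : a ≠ c) (hbc : b ≠ c) :
    IndepFun (fun x : Fin n → ℝ => (x a, x b)) (fun x => x c) μ := by
  have hcard : ({a, b, c} : Finset (Fin n)).card = 3 := by
    rw [Finset.card_insert_of_notMem (by simp [hab, hac]), Finset.card_pair hbc]
  have h := htup {a, b, c} (by omega) (by omega)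
  exact h.indepFun_prodMk (fun i => measurable_pi_apply _)
    ⟨a, by simp⟩ ⟨b, by simp⟩ ⟨c, by simp⟩ (by simp [hac]) (by simp [hbc])

lemma aux_indep_quad {m : ℕ} (hm : 5 ≤ m)
    (htup : TuplewiseIndep μ m (fun k (x : Fin n → ℝ) => x k))
    {a b c d : Fin n} (hac : a ≠ c) (had : a ≠ d) (hbc : b ≠ c) (hbd : b ≠ d) (hab : a ≠ b)
    (hcd : c ≠ d) :
    IndepFun (fun x : Fin n → ℝ => (x a, x b)) (fun x => (x c, x d)) μ := by
  have hcard : ({a, b, c, d} : Finset (Fin n)).card = 4 := by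
    rw [Finset.card_insert_of_notMem (by simp [hab, hac, had]),
      Finset.card_insert_of_notMem (by simp [hbc, hbd]), Finset.card_pair hcd]
  have h := htup {a, b, c, d} (by omega) (by omega)
  exact h.indepFun_prodMk_prodMk (fun i => measurable_pi_apply _)
    ⟨a, by simp⟩ ⟨b, by simp⟩ ⟨c, by simp⟩ ⟨d, by simp⟩
    (by simp [hac]) (by simp [had]) (by simp [hbc]) (by simp [hbd])

section Moments
variable {m : ℕ}
variable (hmar : ∀ k : Fin n, Measure.map (fun x : Fin n → ℝ => x k) μ = lambdaUnps3)
variable (hm : 5 ≤ m) (htup : TuplewiseIndep μ m (fun k (x : Fin n → ℝ) => x k))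
include hmar

lemma aux_coord_e1 (k : Fin n) : ∫ x, x k ∂μ = 0 := by
  simpa using (aux_coord_pow hmar k 1).trans aux_lam_pow1

lemma aux_e2 (k : Fin n) : ∫ x, (x k)^2 ∂μ = 1 :=
  (aux_coord_pow hmar k 2).trans aux_lam_pow2

lemma aux_e4 (k : Fin n) : ∫ x, (x k)^4 ∂μ = 9/5 :=
  (aux_coord_pow hmar k 4).trans aux_lam_pow4

include hm htup

lemma aux_e11 {a b : Fin n} (hab : a ≠ b) : ∫ x, x a * x b ∂μ = 0 := by
  have h := (aux_indep_pair hm htup hab).integral_mul_eq_mul_integral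
    (measurable_pi_apply a).aestronglyMeasurable (measurable_pi_apply b).aestronglyMeasurable
  calc ∫ x, x a * x b ∂μ = (∫ x, x a ∂μ) * ∫ x, x b ∂μ := h
  _ = 0 := by rw [aux_coord_e1 hmar a, aux_coord_e1 hmar b]; ring

lemma aux_e22 {a b : Fin n} (hab : a ≠ b) : ∫ x, (x a)^2 * (x b)^2 ∂μ = 1 := by
  have hi : IndepFun (fun x : Fin n → ℝ => (x a)^2) (fun x => (x b)^2) μ :=
    (aux_indep_pair hm htup hab).comp (measurable_id.pow_const 2) (measurable_id.pow_const 2)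
  have h := hi.integral_mul_eq_mul_integral ((measurable_pi_apply a).pow_const 2).aestronglyMeasurable
    ((measurable_pi_apply b).pow_const 2).aestronglyMeasurable
  calc ∫ x, (x a)^2 * (x b)^2 ∂μ
      = (∫ x, (x a)^2 ∂μ) * ∫ x, (x b)^2 ∂μ := h
  _ = 1 := by rw [aux_e2 hmar a, aux_e2 hmar b]; ring

lemma aux_e31 {a b : Fin n} (hab : a ≠ b) : ∫ x, (x a)^3 * x b ∂μ = 0 := by
  have hi : IndepFun (fun x : Fin n → ℝ => (x a)^3) (fun x => x b) μ :=
    (aux_indep_pair hm htup hab).comp (measurable_id.pow_const 3) measurable_id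
  have h := hi.integral_mul_eq_mul_integral ((measurable_pi_apply a).pow_const 3).aestronglyMeasurable
    (measurable_pi_apply b).aestronglyMeasurable
  calc ∫ x, (x a)^3 * x b ∂μ = (∫ x, (x a)^3 ∂μ) * ∫ x, x b ∂μ := h
  _ = 0 := by rw [aux_coord_e1 hmar b]; ring

lemma aux_e211 {a b c : Fin n} (hab : a ≠ b) (hac : a ≠ c) (hbc : b ≠ c) :
    ∫ x, (x a)^2 * x b * x c ∂μ = 0 := by
  have hi : IndepFun (fun x : Fin n → ℝ => (x a)^2 * x b) (fun x => x c) μ :=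
    (aux_indep_triple hm htup hab hac hbc).comp
      ((measurable_fst.pow_const 2).mul measurable_snd) measurable_id
  have h := hi.integral_mul_eq_mul_integral
    (((measurable_pi_apply a).pow_const 2).mul (measurable_pi_apply b)).aestronglyMeasurable
    (measurable_pi_apply c).aestronglyMeasurable
  calc ∫ x, (x a)^2 * x b * x c ∂μ = (∫ x, (x a)^2 * x b ∂μ) * ∫ x, x c ∂μ := h
  _ = 0 := by rw [aux_coord_e1 hmar c]; ring

lemma aux_e1111 {a b c d : Fin n} (hac : a ≠ c) (had : a ≠ d) (hbc : b ≠ c) (hbd : b ≠ d)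
    (hab : a ≠ b) (hcd : c ≠ d) : ∫ x, (x a * x b) * (x c * x d) ∂μ = 0 := by
  have hi : IndepFun (fun x : Fin n → ℝ => x a * x b) (fun x => x c * x d) μ :=
    (aux_indep_quad hm htup hac had hbc hbd hab hcd).comp
      (measurable_fst.mul measurable_snd) (measurable_fst.mul measurable_snd)
  have h := hi.integral_mul_eq_mul_integral
    ((measurable_pi_apply a).mul (measurable_pi_apply b)).aestronglyMeasurable
    ((measurable_pi_apply c).mul (measurable_pi_apply d)).aestronglyMeasurable
  calc ∫ x, (x a * x b) * (x c * x d) ∂μ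
      = (∫ x, x a * x b ∂μ) * ∫ x, x c * x d ∂μ := h
  _ = 0 := by rw [aux_e11 hmar hm htup hab]; ring

set_option linter.unreachableTactic false in
set_option linter.unnecessarySeqFocus false in
lemma aux_keyterm (a b c d : Fin n) :
    ∫ x, (x a * x b) * (x c * x d) ∂μ ≤
      (if a = b then (1:ℝ) else 0) * (if c = d then 1 else 0) +
      (if a = c then (1:ℝ) else 0) * (if b = d then 1 else 0) +
      (if a = d then (1:ℝ) else 0) * (if b = c then 1 else 0) := by
  by_cases hab : a = b <;> by_cases hcd : c = d
  · subst hab; subst hcd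
    by_cases hac : a = c
    · subst hac
      have hL : ∫ x, (x a * x a) * (x a * x a) ∂μ = 9/5 := by
        rw [show (fun x : Fin n → ℝ => (x a * x a) * (x a * x a)) = fun x => (x a)^4 by
          funext x; ring]
        exact aux_e4 hmar a
      rw [hL]; norm_num
    · have hL : ∫ x, (x a * x a) * (x c * x c) ∂μ = 1 := by
        rw [show (fun x : Fin n → ℝ => (x a * x a) * (x c * x c)) = fun x => (x a)^2 * (x c)^2 by
          funext x; ring]
        exact aux_e22 hmar hm htup hac
      rw [hL]; split_ifs <;> simp_all <;> norm_num
  · subst hab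
    have hL : ∫ x, (x a * x a) * (x c * x d) ∂μ = 0 := by
      by_cases hac : a = c
      · subst hac
        rw [show (fun x : Fin n → ℝ => (x a * x a) * (x a * x d)) = fun x => (x a)^3 * x d by
          funext x; ring]
        exact aux_e31 hmar hm htup hcd
      · by_cases had : a = d
        · subst had
          rw [show (fun x : Fin n → ℝ => (x a * x a) * (x c * x a)) = fun x => (x a)^3 * x c by
            funext x; ring]
          exact aux_e31 hmar hm htup hac
        · rw [show (fun x : Fin n → ℝ => (x a * x a) * (x c * x d)) = fun x => (x a)^2 * x c * x d
            by funext x; ring]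
          exact aux_e211 hmar hm htup hac had hcd
    rw [hL]; split_ifs <;> simp_all <;> norm_num
  · subst hcd
    have hL : ∫ x, (x a * x b) * (x c * x c) ∂μ = 0 := by
      by_cases hca : c = a
      · subst hca
        rw [show (fun x : Fin n → ℝ => (x c * x b) * (x c * x c)) = fun x => (x c)^3 * x b by
          funext x; ring]
        exact aux_e31 hmar hm htup hab
      · by_cases hcb : c = b
        · subst hcb
          rw [show (fun x : Fin n → ℝ => (x a * x c) * (x c * x c)) = fun x => (x c)^3 * x a by
            funext x; ring]
          exact aux_e31 hmar hm htup (fun h => hab (h.symm ▸ rfl))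
        · rw [show (fun x : Fin n → ℝ => (x a * x b) * (x c * x c)) = fun x => (x c)^2 * x a * x b
            by funext x; ring]
          exact aux_e211 hmar hm htup hca hcb hab
    rw [hL]; split_ifs <;> simp_all <;> norm_num
  · by_cases hac : a = c
    · subst hac
      by_cases hbd : b = d
      · subst hbd
        have hL : ∫ x, (x a * x b) * (x a * x b) ∂μ = 1 := by
          rw [show (fun x : Fin n → ℝ => (x a * x b) * (x a * x b)) = fun x => (x a)^2 * (x b)^2
            by funext x; ring]
          exact aux_e22 hmar hm htup hab
        rw [hL]; split_ifs <;> simp_all <;> norm_num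
      · have hL : ∫ x, (x a * x b) * (x a * x d) ∂μ = 0 := by
          rw [show (fun x : Fin n → ℝ => (x a * x b) * (x a * x d)) = fun x => (x a)^2 * x b * x d
            by funext x; ring]
          exact aux_e211 hmar hm htup hab hcd hbd
        rw [hL]; split_ifs <;> simp_all <;> norm_num
    · by_cases had : a = d
      · subst had
        by_cases hbc : b = c
        · subst hbc
          have hL : ∫ x, (x a * x b) * (x b * x a) ∂μ = 1 := by
            rw [show (fun x : Fin n → ℝ => (x a * x b) * (x b * x a)) = fun x => (x a)^2 * (x b)^2
              by funext x; ring]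
            exact aux_e22 hmar hm htup hab
          rw [hL]; split_ifs <;> simp_all <;> norm_num
        · have hL : ∫ x, (x a * x b) * (x c * x a) ∂μ = 0 := by
            rw [show (fun x : Fin n → ℝ => (x a * x b) * (x c * x a)) = fun x => (x a)^2 * x b * x c
              by funext x; ring]
            exact aux_e211 hmar hm htup hab hac hbc
          rw [hL]; split_ifs <;> simp_all <;> norm_num
      · by_cases hbc : b = c
        · subst hbc
          have hL : ∫ x, (x a * x b) * (x b * x d) ∂μ = 0 := by
            rw [show (fun x : Fin n → ℝ => (x a * x b) * (x b * x d)) = fun x => (x b)^2 * x a * x d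
              by funext x; ring]
            exact aux_e211 hmar hm htup (fun h => hab h.symm) hcd had
          rw [hL]; split_ifs <;> simp_all <;> norm_num
        · by_cases hbd : b = d
          · subst hbd
            have hL : ∫ x, (x a * x b) * (x c * x b) ∂μ = 0 := by
              rw [show (fun x : Fin n → ℝ => (x a * x b) * (x c * x b))
                = fun x => (x b)^2 * x a * x c by funext x; ring]
              exact aux_e211 hmar hm htup (fun h => hab h.symm) (fun h => hcd h.symm) hac
            rw [hL]; split_ifs <;> simp_all <;> norm_num
          · have hL := aux_e1111 hmar hm htup (μ := μ) hac had hbc hbd hab hcd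
            rw [hL]; split_ifs <;> simp_all <;> norm_num

end Moments

lemma aux_hs2 (x : Fin n → ℝ) : (∑ i, x i)^2 = ∑ p : Fin n × Fin n, x p.1 * x p.2 := by
  rw [sq, Finset.sum_mul_sum, ← Finset.sum_product']
  rfl

lemma aux_hs4 (x : Fin n → ℝ) : (∑ i, x i)^4
    = ∑ p : (Fin n × Fin n) × (Fin n × Fin n), (x p.1.1 * x p.1.2) * (x p.2.1 * x p.2.2) := by
  have h : (∑ i, x i)^4 = ((∑ i, x i)^2)^2 := by ring
  rw [h, aux_hs2, sq, Finset.sum_mul_sum, ← Finset.sum_product']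
  rfl

section Sums
variable [IsProbabilityMeasure μ]
variable (hmar : ∀ k : Fin n, Measure.map (fun x : Fin n → ℝ => x k) μ = lambdaUnps3)
include hmar

lemma aux_int2 (a b : Fin n) : Integrable (fun x : Fin n → ℝ => x a * x b) μ := by
  refine (integrable_const (3:ℝ)).mono'
    ((measurable_pi_apply a).mul (measurable_pi_apply b)).aestronglyMeasurable ?_
  filter_upwards [aux_ae_coord_bound hmar] with x hx
  rw [Real.norm_eq_abs, abs_mul]
  calc |x a| * |x b| ≤ Real.sqrt 3 * Real.sqrt 3 :=
        mul_le_mul (hx a) (hx b) (abs_nonneg _) (Real.sqrt_nonneg _)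
  _ = 3 := Real.mul_self_sqrt (by norm_num)

lemma aux_int4 (a b c d : Fin n) :
    Integrable (fun x : Fin n → ℝ => (x a * x b) * (x c * x d)) μ := by
  refine (integrable_const (9:ℝ)).mono'
    (((measurable_pi_apply a).mul (measurable_pi_apply b)).mul
      ((measurable_pi_apply c).mul (measurable_pi_apply d))).aestronglyMeasurable ?_
  filter_upwards [aux_ae_coord_bound hmar] with x hx
  have hab : |x a * x b| ≤ 3 := by
    rw [abs_mul]
    calc |x a| * |x b| ≤ Real.sqrt 3 * Real.sqrt 3 :=
          mul_le_mul (hx a) (hx b) (abs_nonneg _) (Real.sqrt_nonneg _)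
    _ = 3 := Real.mul_self_sqrt (by norm_num)
  have hcd : |x c * x d| ≤ 3 := by
    rw [abs_mul]
    calc |x c| * |x d| ≤ Real.sqrt 3 * Real.sqrt 3 :=
          mul_le_mul (hx c) (hx d) (abs_nonneg _) (Real.sqrt_nonneg _)
    _ = 3 := Real.mul_self_sqrt (by norm_num)
  rw [Real.norm_eq_abs, abs_mul]
  calc |x a * x b| * |x c * x d| ≤ 3 * 3 :=
        mul_le_mul hab hcd (abs_nonneg _) (by norm_num)
  _ = 9 := by norm_num

variable {m : ℕ} (hm : 5 ≤ m) (htup : TuplewiseIndep μ m (fun k (x : Fin n → ℝ) => x k))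
include hm htup

lemma aux_es2 : ∫ x, (∑ i, x i)^2 ∂μ = n := by
  calc ∫ x, (∑ i, x i)^2 ∂μ = ∫ x, ∑ p : Fin n × Fin n, x p.1 * x p.2 ∂μ := by
        simp_rw [aux_hs2]
  _ = ∑ p : Fin n × Fin n, ∫ x, x p.1 * x p.2 ∂μ :=
        integral_finset_sum _ (fun p _ => aux_int2 hmar p.1 p.2)
  _ = ∑ p : Fin n × Fin n, (if p.1 = p.2 then (1:ℝ) else 0) := by
        refine Finset.sum_congr rfl fun p _ => ?_
        by_cases h : p.1 = p.2
        · rw [if_pos h, show (fun x : Fin n → ℝ => x p.1 * x p.2) = fun x => (x p.2)^2 by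
            funext x; rw [h]; ring]
          exact aux_e2 hmar p.2
        · rw [if_neg h]; exact aux_e11 hmar hm htup h
  _ = n := by
        simp only [Fintype.sum_prod_type]
        simp [Finset.sum_ite_eq]


lemma aux_es4 : ∫ x, (∑ i, x i)^4 ∂μ ≤ 3 * n^2 := by
  calc ∫ x, (∑ i, x i)^4 ∂μ
      = ∑ p : (Fin n × Fin n) × (Fin n × Fin n),
          ∫ x, (x p.1.1 * x p.1.2) * (x p.2.1 * x p.2.2) ∂μ := by
        simp_rw [aux_hs4]
        exact integral_finset_sum _ (fun p _ => aux_int4 hmar p.1.1 p.1.2 p.2.1 p.2.2)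
  _ ≤ ∑ p : (Fin n × Fin n) × (Fin n × Fin n),
      ((if p.1.1 = p.1.2 then (1:ℝ) else 0) * (if p.2.1 = p.2.2 then 1 else 0) +
       (if p.1.1 = p.2.1 then (1:ℝ) else 0) * (if p.1.2 = p.2.2 then 1 else 0) +
       (if p.1.1 = p.2.2 then (1:ℝ) else 0) * (if p.1.2 = p.2.1 then 1 else 0)) :=
        Finset.sum_le_sum (fun p _ => aux_keyterm hmar hm htup p.1.1 p.1.2 p.2.1 p.2.2)
  _ = 3 * n^2 := by
        simp only [Fintype.sum_prod_type]
        simp [Finset.sum_add_distrib, ite_zero_mul, mul_ite, Finset.sum_ite_eq,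
          Finset.sum_ite_eq', Finset.card_univ]
        simp [apply_ite Finset.card, Finset.sum_ite_eq, Finset.card_univ]
        ring

end Sums

set_option maxHeartbeats 1000000 in
lemma aux_chain [IsProbabilityMeasure μ] (hn : 1 ≤ n)
    (hbd : ∀ᵐ x ∂μ, ∀ k, |x k| ≤ Real.sqrt 3)
    (hB : ∫ x, (∑ i, x i)^2 ∂μ = n)
    (hC : ∫ x, (∑ i, x i)^4 ∂μ ≤ 3 * n^2) :
    (1/2) * Real.sqrt n ≤ ∫ x, |∑ i, x i| ∂μ := by
  set s : (Fin n → ℝ) → ℝ := fun x => ∑ i, x i with hs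
  have hsmeas : Measurable s := Finset.measurable_sum _ (fun i _ => measurable_pi_apply i)
  have hsbd : ∀ᵐ x ∂μ, |s x| ≤ n * Real.sqrt 3 := by
    filter_upwards [hbd] with x hx
    calc |s x| ≤ ∑ i, |x i| := Finset.abs_sum_le_sum_abs _ _
    _ ≤ ∑ _i : Fin n, Real.sqrt 3 := Finset.sum_le_sum (fun i _ => hx i)
    _ = n * Real.sqrt 3 := by simp [mul_comm]
  set M : ℝ := n * Real.sqrt 3 with hM
  have hM0 : 0 ≤ M := by positivity
  have hf1m : Measurable (fun x => Real.sqrt |s x|) :=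
    Real.continuous_sqrt.measurable.comp hsmeas.abs
  have hg1m : Measurable (fun x => |s x| * Real.sqrt |s x|) := hsmeas.abs.mul hf1m
  have hf2m : Measurable (fun x => |s x|) := hsmeas.abs
  have hg2m : Measurable (fun x => (s x)^2) := hsmeas.pow_const 2
  have memf1 : MemLp (fun x => Real.sqrt |s x|) (ENNReal.ofReal 2) μ := by
    refine MemLp.of_bound hf1m.aestronglyMeasurable (Real.sqrt M) ?_
    filter_upwards [hsbd] with x hx
    rw [Real.norm_eq_abs, abs_of_nonneg (Real.sqrt_nonneg _)]
    exact Real.sqrt_le_sqrt hx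
  have memg1 : MemLp (fun x => |s x| * Real.sqrt |s x|) (ENNReal.ofReal 2) μ := by
    refine MemLp.of_bound hg1m.aestronglyMeasurable (M * Real.sqrt M) ?_
    filter_upwards [hsbd] with x hx
    rw [Real.norm_eq_abs, abs_of_nonneg (by positivity)]
    exact mul_le_mul hx (Real.sqrt_le_sqrt hx) (Real.sqrt_nonneg _) hM0
  have memf2 : MemLp (fun x => |s x|) (ENNReal.ofReal 2) μ := by
    refine MemLp.of_bound hf2m.aestronglyMeasurable M ?_
    filter_upwards [hsbd] with x hx
    rwa [Real.norm_eq_abs, abs_abs]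
  have memg2 : MemLp (fun x => (s x)^2) (ENNReal.ofReal 2) μ := by
    refine MemLp.of_bound hg2m.aestronglyMeasurable (M^2) ?_
    filter_upwards [hsbd] with x hx
    rw [Real.norm_eq_abs, abs_pow]
    exact pow_le_pow_left₀ (abs_nonneg _) hx 2
  have hpq : Real.HolderConjugate 2 2 := Real.holderConjugate_iff.mpr ⟨one_lt_two, by norm_num⟩
  have e0 : ∀ x : Fin n → ℝ, Real.sqrt |s x| * (|s x| * Real.sqrt |s x|) = (s x)^2 := by
    intro x
    calc Real.sqrt |s x| * (|s x| * Real.sqrt |s x|)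
        = (Real.sqrt |s x| * Real.sqrt |s x|) * |s x| := by ring
    _ = |s x| * |s x| := by rw [Real.mul_self_sqrt (abs_nonneg _)]
    _ = (s x)^2 := by rw [← abs_mul, abs_mul_self]; ring
  have e1 : ∀ x : Fin n → ℝ, (Real.sqrt |s x|) ^ (2:ℝ) = |s x| := fun x => by
    rw [Real.rpow_two, Real.sq_sqrt (abs_nonneg _)]
  have e2 : ∀ x : Fin n → ℝ, (|s x| * Real.sqrt |s x|) ^ (2:ℝ) = |s x|^3 := fun x => by
    rw [Real.rpow_two, mul_pow, Real.sq_sqrt (abs_nonneg _)]; ring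
  have e3 : ∀ x : Fin n → ℝ, |s x| * (s x)^2 = |s x|^3 := fun x => by
    rw [← sq_abs]; ring
  have e4 : ∀ x : Fin n → ℝ, |s x| ^ (2:ℝ) = (s x)^2 := fun x => by
    rw [Real.rpow_two, sq_abs]
  have e5 : ∀ x : Fin n → ℝ, ((s x)^2) ^ (2:ℝ) = (s x)^4 := fun x => by
    rw [Real.rpow_two]; ring
  have hcs1 : ∫ x, (s x)^2 ∂μ
      ≤ (∫ x, |s x| ∂μ) ^ (1/2:ℝ) * (∫ x, |s x|^3 ∂μ) ^ (1/2:ℝ) := by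
    have h := integral_mul_le_Lp_mul_Lq_of_nonneg hpq
      (Eventually.of_forall fun x => Real.sqrt_nonneg (|s x|))
      (Eventually.of_forall fun x => by positivity) memf1 memg1
    simp_rw [e0, e1, e2] at h
    exact h
  have hcs2 : ∫ x, |s x|^3 ∂μ
      ≤ (∫ x, (s x)^2 ∂μ) ^ (1/2:ℝ) * (∫ x, (s x)^4 ∂μ) ^ (1/2:ℝ) := by
    have h := integral_mul_le_Lp_mul_Lq_of_nonneg hpq
      (Eventually.of_forall fun x => abs_nonneg (s x))
      (Eventually.of_forall fun x => sq_nonneg (s x)) memf2 memg2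
    simp_rw [e3, e4, e5] at h
    exact h
  set A := ∫ x, |s x| ∂μ with hA
  set A3 := ∫ x, |s x|^3 ∂μ with hA3
  set B := ∫ x, (s x)^2 ∂μ with hBdef
  set C := ∫ x, (s x)^4 ∂μ with hCdef
  have hA0 : 0 ≤ A := integral_nonneg fun x => abs_nonneg _
  have hA30 : 0 ≤ A3 := integral_nonneg fun x => by positivity
  have hB0 : 0 ≤ B := integral_nonneg fun x => sq_nonneg _
  have hC0 : 0 ≤ C := integral_nonneg fun x => by positivity
  rw [← Real.sqrt_eq_rpow, ← Real.sqrt_eq_rpow] at hcs1 hcs2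
  have h1' : B^2 ≤ A * A3 := by
    nlinarith [hcs1, hB0, Real.sq_sqrt hA0, Real.sq_sqrt hA30,
      Real.sqrt_nonneg A, Real.sqrt_nonneg A3]
  have h2' : A3^2 ≤ B * C := by
    nlinarith [hcs2, hA30, Real.sq_sqrt hB0, Real.sq_sqrt hC0,
      Real.sqrt_nonneg B, Real.sqrt_nonneg C]
  have hn1 : (1:ℝ) ≤ (n:ℝ) := by exact_mod_cast hn
  have hnp : (0:ℝ) < n := by linarith
  have eA : B^4 ≤ (A*A3)^2 := by
    calc B^4 = B^2*B^2 := by ring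
    _ ≤ (A*A3)*(A*A3) := mul_self_le_mul_self (sq_nonneg B) h1'
    _ = (A*A3)^2 := by ring
  have eB : A^2*A3^2 ≤ A^2*(B*C) := mul_le_mul_of_nonneg_left h2' (sq_nonneg A)
  have h4 : (n:ℝ)^4 ≤ A^2 * ((n:ℝ) * (3*(n:ℝ)^2)) := by
    have t1 : B^4 ≤ A^2 * (B*C) := by
      calc B^4 ≤ (A*A3)^2 := eA
      _ = A^2*A3^2 := by ring
      _ ≤ A^2*(B*C) := eB
    rw [hB] at t1
    have t2 : A^2 * ((n:ℝ)*C) ≤ A^2 * ((n:ℝ)*(3*(n:ℝ)^2)) :=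
      mul_le_mul_of_nonneg_left
        (mul_le_mul_of_nonneg_left hC (le_of_lt hnp)) (sq_nonneg A)
    linarith [t1, t2]
  have h5 : (n:ℝ) ≤ 3 * A^2 := by nlinarith [h4, hnp, pow_pos hnp 3]
  have h6 : Real.sqrt ((n:ℝ)/4) ≤ Real.sqrt (A^2) := Real.sqrt_le_sqrt (by nlinarith [h5])
  rw [Real.sqrt_sq hA0] at h6
  have h7 : Real.sqrt ((n:ℝ)/4) = (1/2) * Real.sqrt n := by
    rw [Real.sqrt_div (by positivity : (0:ℝ) ≤ (n:ℝ)) 4,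
      show (4:ℝ) = 2^2 by norm_num, Real.sqrt_sq (by norm_num : (0:ℝ) ≤ 2)]
    ring
  rw [← h7]
  exact h6

lemma aux_phi_apply (x : Fin n → ℝ) (k : Fin n) :
    phi n x k = if 0 < ∑ i, x i then x k else if (∑ i, x i) = 0 then 0 else -(x k) := by
  unfold phi; split_ifs <;> rfl

lemma aux_phi_meas (k : Fin n) : Measurable (fun x : Fin n → ℝ => phi n x k) := by
  have hsm : Measurable (fun x : Fin n → ℝ => ∑ i, x i) :=
    Finset.measurable_sum _ (fun i _ => measurable_pi_apply i)
  have : (fun x : Fin n → ℝ => phi n x k)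
      = fun x => if 0 < ∑ i, x i then x k else if (∑ i, x i) = 0 then 0 else -(x k) := by
    funext x; exact aux_phi_apply x k
  rw [this]
  exact Measurable.ite (measurableSet_lt measurable_const hsm) (measurable_pi_apply k)
    (Measurable.ite (hsm (measurableSet_singleton 0)) measurable_const
      (measurable_pi_apply k).neg)

lemma aux_phi_sum (x : Fin n → ℝ) : ∑ k, phi n x k = |∑ k, x k| := by
  unfold phi
  split_ifs with h1 h2
  · exact (abs_of_pos h1).symm
  · simp [h2]
  · push_neg at h1
    have hneg : ∑ i, x i < 0 := lt_of_le_of_ne h1 h2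
    simp only [Pi.neg_apply]
    rw [Finset.sum_neg_distrib, abs_of_neg hneg]

lemma aux_phi_abs_le (x : Fin n → ℝ) (k : Fin n) : |phi n x k| ≤ |x k| := by
  rw [aux_phi_apply]
  split_ifs <;> simp [abs_nonneg]

lemma aux_phi_perm (σ : Equiv.Perm (Fin n)) (x : Fin n → ℝ) (k : Fin n) :
    phi n (x ∘ σ) k = phi n x (σ k) := by
  have hsum : ∑ i, (x ∘ σ) i = ∑ i, x i := Equiv.sum_comp σ x
  rw [aux_phi_apply, aux_phi_apply, hsum]
  rfl

end AuxLemmas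

/-- Lemma 2.7: properties of `Y = φ_n(W)` when the law of `W` satisfies Condition `H(n)`. -/
theorem stmt7 (L : ℕ) (hLeven : Even L) (hL6 : 6 ≤ L) (n : ℕ) (hn : 1 ≤ n)
    {Ω : Type*} [MeasurableSpace Ω] (P : Measure Ω) [IsProbabilityMeasure P]
    (W : Ω → Fin n → ℝ) (hWmeas : Measurable W)
    (hH : CondH L n (Measure.map W P)) :
    -- (i)
    ((∫ ω, ∑ k, phi n (W ω) k ∂P) = ∫ ω, |∑ k, W ω k| ∂P ∧
      (1/2) * Real.sqrt n ≤ ∫ ω, |∑ k, W ω k| ∂P) ∧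
    -- (ii)
    (∀ k k' : Fin n,
      Measure.map (fun ω => phi n (W ω) k) P = Measure.map (fun ω => phi n (W ω) k') P) ∧
    -- (iii)
    (∀ k : Fin n, (∫ ω, phi n (W ω) k ∂P) = (1 / n) * ∫ ω, |∑ i, W ω i| ∂P) :=  by
  classical
  set μ : Measure (Fin n → ℝ) := Measure.map W P with hmu
  haveI : IsProbabilityMeasure μ := Measure.isProbabilityMeasure_map hWmeas.aemeasurable
  have hm5 : 5 ≤ L - 1 := by omega
  have htup := hH.tuplewise
  have hmar := hH.marginal
  have hbdmu : ∀ᵐ x ∂μ, ∀ k, |x k| ≤ Real.sqrt 3 := aux_ae_coord_bound hmar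
  have hbdP : ∀ᵐ ω ∂P, ∀ k, |W ω k| ≤ Real.sqrt 3 :=
    ae_of_ae_map hWmeas.aemeasurable hbdmu
  -- first equality of (i)
  have hsum_eq : (fun ω => ∑ k, phi n (W ω) k) = fun ω => |∑ k, W ω k| := by
    funext ω; exact aux_phi_sum (W ω)
  have hIeq : (∫ ω, ∑ k, phi n (W ω) k ∂P) = ∫ ω, |∑ k, W ω k| ∂P := by rw [hsum_eq]
  -- transfer the integral of |∑ W| to μ
  have habs_meas : Measurable (fun x : Fin n → ℝ => |∑ i, x i|) :=
    (Finset.measurable_sum _ (fun i _ => measurable_pi_apply i)).abs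
  have htrans : ∫ ω, |∑ k, W ω k| ∂P = ∫ x, |∑ i, x i| ∂μ := by
    rw [hmu]
    exact (integral_map hWmeas.aemeasurable habs_meas.aestronglyMeasurable).symm
  -- moment bounds
  have hB : ∫ x, (∑ i, x i)^2 ∂μ = n := aux_es2 hmar hm5 htup
  have hC : ∫ x, (∑ i, x i)^4 ∂μ ≤ 3 * n^2 := aux_es4 hmar hm5 htup
  have hlow : (1/2) * Real.sqrt n ≤ ∫ ω, |∑ k, W ω k| ∂P := by
    rw [htrans]
    exact aux_chain hn hbdmu hB hC
  -- part (ii)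
  have hz : 0 < n := hn
  set z : Fin n := ⟨0, hz⟩ with hzdef
  have hii : ∀ k : Fin n,
      Measure.map (fun ω => phi n (W ω) k) P = Measure.map (fun x => phi n x z) μ := by
    intro k
    obtain ⟨σ, hσ0, hσmap⟩ := hH.perm k
    have hσz : σ z = k := hσ0
    have hcompmeas : Measurable (fun x : Fin n → ℝ => x ∘ σ) :=
      measurable_pi_lambda _ (fun i => measurable_pi_apply (σ i))
    have h1 : Measure.map (fun ω => phi n (W ω) k) P = Measure.map (fun x => phi n x k) μ := by
      rw [hmu, Measure.map_map (aux_phi_meas k) hWmeas]; rfl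
    have h2 : Measure.map (fun x : Fin n → ℝ => phi n x z) μ
        = Measure.map (fun x : Fin n → ℝ => phi n x k) μ := by
      conv_lhs => rw [← hσmap]
      rw [Measure.map_map (aux_phi_meas z) hcompmeas]
      congr 1
      funext x
      show phi n (x ∘ σ) z = phi n x k
      rw [aux_phi_perm σ x z, hσz]
    rw [h1, h2]
  have part2 : ∀ k k' : Fin n,
      Measure.map (fun ω => phi n (W ω) k) P = Measure.map (fun ω => phi n (W ω) k') P := by
    intro k k'; rw [hii k, hii k']
  -- integrability of each Y k
  have hYint : ∀ k : Fin n, Integrable (fun ω => phi n (W ω) k) P := by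
    intro k
    refine (integrable_const (Real.sqrt 3)).mono'
      ((aux_phi_meas k).comp hWmeas).aestronglyMeasurable ?_
    filter_upwards [hbdP] with ω hω
    rw [Real.norm_eq_abs]
    exact le_trans (aux_phi_abs_le (W ω) k) (hω k)
  -- equal expectations
  have hEeq : ∀ k : Fin n, (∫ ω, phi n (W ω) k ∂P) = ∫ ω, phi n (W ω) z ∂P := by
    intro k
    have hk : ∫ ω, phi n (W ω) k ∂P
        = ∫ y, y ∂(Measure.map (fun ω => phi n (W ω) k) P) :=
      (integral_map ((aux_phi_meas k).comp hWmeas).aemeasurable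
        measurable_id.aestronglyMeasurable).symm
    have hz' : ∫ ω, phi n (W ω) z ∂P
        = ∫ y, y ∂(Measure.map (fun ω => phi n (W ω) z) P) :=
      (integral_map ((aux_phi_meas z).comp hWmeas).aemeasurable
        measurable_id.aestronglyMeasurable).symm
    rw [hk, hz', part2 k z]
  -- sum of expectations
  have hsumE : ∑ k : Fin n, (∫ ω, phi n (W ω) k ∂P) = ∫ ω, |∑ k, W ω k| ∂P := by
    rw [← hIeq, ← integral_finset_sum _ (fun k _ => hYint k)]
  have hnR : ((n:ℝ)) ≠ 0 := by
    have : (0:ℝ) < n := by exact_mod_cast hz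
    linarith
  have part3 : ∀ k : Fin n, (∫ ω, phi n (W ω) k ∂P) = (1 / n) * ∫ ω, |∑ i, W ω i| ∂P := by
    intro k
    have hconst : ∑ k : Fin n, (∫ ω, phi n (W ω) k ∂P)
        = n * ∫ ω, phi n (W ω) z ∂P := by
      rw [Finset.sum_congr rfl (fun k _ => hEeq k)]
      simp [Finset.card_univ, mul_comm]
    have : (n:ℝ) * ∫ ω, phi n (W ω) z ∂P = ∫ ω, |∑ k, W ω k| ∂P := by
      rw [← hconst, hsumE]
    rw [hEeq k]
    field_simp
    linarith [this]
  exact ⟨⟨hIeq, hlow⟩, part2, part3⟩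
end

section
/- Let L be a fixed even integer with L ≥ 6, let n ≥ 1, and let μ be a probability measure on ℝ^n satisfying Condition H(n). Let W = (W_0,…,W_{Ln−1}) = ⟨ζ^(0)|⋯|ζ^(L−1)⟩, where ζ^(0),…,ζ^(L−1) are independent ℝ^n-valued random vectors each with law μ, and let Y = (Y_0,…,Y_{Ln−1}) be an ℝ^{Ln}-valued random vector with law θ(μ). Then for every nonempty set S ⊆ {0,…,Ln−1} and every integer M ∈ {1,2,…,L−1}, E(Σ_{k∈S} Y_k)^M = E(Σ_{k∈S} W_k)^M; moreover, when M is odd both sides equal 0. -/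
open MeasureTheory ProbabilityTheory Filter Topology
open scoped ENNReal NNReal

noncomputable section Stmt11Aux
open MeasureTheory Finset

/-! ### Basic facts about `phi` and `splice` -/

lemma measurable_phi11 (n : ℕ) : Measurable (phi n) := by
  unfold phi
  have hs : Measurable fun x : Fin n → ℝ => ∑ i, x i :=
    Finset.measurable_sum _ fun i _ => measurable_pi_apply i
  refine Measurable.ite (measurableSet_lt measurable_const hs) measurable_id ?_
  exact Measurable.ite (hs (measurableSet_singleton 0)) measurable_const measurable_id.neg

lemma phi_eq_or11 (n : ℕ) (x : Fin n → ℝ) (hx : (∑ i, x i) ≠ 0) :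
    phi n x = x ∨ phi n x = -x := by
  unfold phi
  by_cases h1 : 0 < ∑ i, x i
  · rw [if_pos h1]; exact Or.inl rfl
  · rw [if_neg h1, if_neg hx]; exact Or.inr rfl

lemma abs_phi_le11 (n : ℕ) (x : Fin n → ℝ) (i : Fin n) : |phi n x i| ≤ |x i| := by
  unfold phi
  split_ifs
  · exact le_rfl
  · simpa using abs_nonneg (x i)
  · simp

/-! ### The finite set `Υ` -/

def tau11 (L : ℕ) (s : Fin L → Bool) : Fin L → ℝ := fun ℓ => if s ℓ then 1 else -1

noncomputable def UpsFin (L : ℕ) : Finset (Fin L → ℝ) :=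
  (Finset.univ.image (tau11 L)).filter (fun x => ∏ ℓ, x ℓ = -1)

lemma mem_UpsFin {L : ℕ} {x : Fin L → ℝ} :
    x ∈ UpsFin L ↔ (∀ ℓ, x ℓ = 1 ∨ x ℓ = -1) ∧ ∏ ℓ, x ℓ = -1 := by
  constructor
  · intro hx
    rcases Finset.mem_filter.1 hx with ⟨him, hprod⟩
    refine ⟨?_, hprod⟩
    rcases Finset.mem_image.1 him with ⟨s, _, rfl⟩
    intro ℓ; by_cases h : s ℓ <;> simp [tau11, h]
  · rintro ⟨h1, h2⟩
    refine Finset.mem_filter.2 ⟨Finset.mem_image.2 ⟨fun ℓ => decide (x ℓ = 1),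
      Finset.mem_univ _, ?_⟩, h2⟩
    funext ℓ
    rcases h1 ℓ with h | h
    · simp [tau11, h]
    · have hne : x ℓ ≠ 1 := by rw [h]; norm_num
      have hd : (decide (x ℓ = 1)) = false := decide_eq_false hne
      have hval : tau11 L (fun ℓ' => decide (x ℓ' = 1)) ℓ = -1 := by
        show (if decide (x ℓ = 1) = true then (1 : ℝ) else -1) = -1
        rw [hd]
        simp
      rw [hval, h]

lemma coe_UpsFin (L : ℕ) : (↑(UpsFin L) : Set (Fin L → ℝ)) = Upsilon L := by
  ext x
  rw [Finset.mem_coe, mem_UpsFin]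
  rfl

lemma prod_tau_pm {L : ℕ} (s : Fin L → Bool) :
    (∏ ℓ, tau11 L s ℓ) = 1 ∨ (∏ ℓ, tau11 L s ℓ) = -1 := by
  refine mul_self_eq_one_iff.mp ?_
  rw [← Finset.prod_mul_distrib]
  refine Finset.prod_eq_one fun ℓ _ => ?_
  cases h : s ℓ <;> simp [tau11, h]

lemma card_UpsFin {L : ℕ} (hL : 1 ≤ L) : (UpsFin L).card = 2 ^ (L - 1) := by
  classical
  have hinj : Function.Injective (tau11 L) := by
    intro s t h
    funext ℓ
    have hc := congrFun h ℓ
    cases hs : s ℓ <;> cases ht : t ℓ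
    · rfl
    · simp only [tau11, hs, ht, if_true, if_false] at hc; norm_num at hc
    · simp only [tau11, hs, ht, if_true, if_false] at hc; norm_num at hc
    · rfl
  have himg : UpsFin L
      = Finset.image (tau11 L) (Finset.univ.filter fun s => ∏ ℓ, tau11 L s ℓ = -1) := by
    rw [UpsFin, Finset.filter_image]
  rw [himg, Finset.card_image_of_injective _ hinj]
  set A := Finset.univ.filter fun s : Fin L → Bool => ∏ ℓ, tau11 L s ℓ = -1 with hA
  set B := Finset.univ.filter fun s : Fin L → Bool => ¬ (∏ ℓ, tau11 L s ℓ = -1) with hB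
  have i0 : Fin L := ⟨0, hL⟩
  have hflip : ∀ s : Fin L → Bool,
      ∏ ℓ, tau11 L (Function.update s ⟨0, hL⟩ (!s ⟨0, hL⟩)) ℓ = - ∏ ℓ, tau11 L s ℓ := by
    intro s
    rw [← Finset.mul_prod_erase Finset.univ _ (Finset.mem_univ (⟨0, hL⟩ : Fin L)),
        ← Finset.mul_prod_erase Finset.univ (fun ℓ => tau11 L s ℓ)
          (Finset.mem_univ (⟨0, hL⟩ : Fin L))]
    have h1 : ∀ ℓ ∈ Finset.univ.erase (⟨0, hL⟩ : Fin L),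
        tau11 L (Function.update s ⟨0, hL⟩ (!s ⟨0, hL⟩)) ℓ = tau11 L s ℓ := by
      intro ℓ hℓ
      have hne : ℓ ≠ ⟨0, hL⟩ := Finset.ne_of_mem_erase hℓ
      simp [tau11, Function.update_of_ne hne]
    rw [Finset.prod_congr rfl h1]
    have h2 : tau11 L (Function.update s ⟨0, hL⟩ (!s ⟨0, hL⟩)) ⟨0, hL⟩ = - tau11 L s ⟨0, hL⟩ := by
      cases h : s ⟨0, hL⟩ <;> simp [tau11, h]
    rw [h2]; ring
  have hcards : A.card = B.card := by
    refine Finset.card_bij' (fun s _ => Function.update s ⟨0, hL⟩ (!s ⟨0, hL⟩))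
      (fun s _ => Function.update s ⟨0, hL⟩ (!s ⟨0, hL⟩)) ?_ ?_ ?_ ?_
    · intro s hs
      have hsA : ∏ ℓ, tau11 L s ℓ = -1 := (Finset.mem_filter.1 hs).2
      refine Finset.mem_filter.2 ⟨Finset.mem_univ _, ?_⟩
      rw [hflip s, hsA]; norm_num
    · intro s hs
      have hsB : ¬ (∏ ℓ, tau11 L s ℓ = -1) := (Finset.mem_filter.1 hs).2
      have h1 : ∏ ℓ, tau11 L s ℓ = 1 := (prod_tau_pm s).resolve_right hsB
      refine Finset.mem_filter.2 ⟨Finset.mem_univ _, ?_⟩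
      rw [hflip s, h1]
    · intro s _
      funext ℓ
      by_cases h : ℓ = ⟨0, hL⟩
      · subst h; simp
      · simp [Function.update_of_ne h]
    · intro s _
      funext ℓ
      by_cases h : ℓ = ⟨0, hL⟩
      · subst h; simp
      · simp [Function.update_of_ne h]
  have htotal : A.card + B.card = 2 ^ L := by
    rw [hA, hB, Finset.card_filter_add_card_filter_not]
    simp
  have h2L : 2 ^ L = 2 * 2 ^ (L - 1) := by
    conv_lhs => rw [show L = (L - 1) + 1 by omega]
    ring
  omega

lemma sum_UpsFin_eq_zero {L : ℕ} (T : Finset (Fin L)) (hT : T.Nonempty)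
    (hTu : T ≠ Finset.univ) :
    ∑ x ∈ UpsFin L, ∏ ℓ ∈ T, x ℓ = 0 := by
  classical
  obtain ⟨i, hi⟩ := hT
  obtain ⟨i', hi'⟩ : ∃ i', i' ∉ T := by
    by_contra h
    push_neg at h
    exact hTu (Finset.eq_univ_iff_forall.2 h)
  have hne : i ≠ i' := fun h => hi' (h ▸ hi)
  set G : (Fin L → ℝ) → (Fin L → ℝ) := fun x ℓ => if ℓ = i ∨ ℓ = i' then -x ℓ else x ℓ with hG
  have hGmem : ∀ x ∈ UpsFin L, G x ∈ UpsFin L := by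
    intro x hx
    rcases mem_UpsFin.1 hx with ⟨h1, h2⟩
    refine mem_UpsFin.2 ⟨?_, ?_⟩
    · intro ℓ
      rcases h1 ℓ with h | h <;> by_cases hc : ℓ = i ∨ ℓ = i' <;> simp [hG, hc, h]
    · have hprod : ∏ ℓ, G x ℓ = ∏ ℓ, x ℓ := by
        rw [← Finset.mul_prod_erase Finset.univ (G x) (Finset.mem_univ i),
            ← Finset.mul_prod_erase (Finset.univ.erase i) (G x)
              (Finset.mem_erase.2 ⟨Ne.symm hne, Finset.mem_univ i'⟩),
            ← Finset.mul_prod_erase Finset.univ x (Finset.mem_univ i),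
            ← Finset.mul_prod_erase (Finset.univ.erase i) x
              (Finset.mem_erase.2 ⟨Ne.symm hne, Finset.mem_univ i'⟩)]
        have hrest : ∀ ℓ ∈ (Finset.univ.erase i).erase i', G x ℓ = x ℓ := by
          intro ℓ hℓ
          rcases Finset.mem_erase.1 hℓ with ⟨hℓ1, hℓ2⟩
          rcases Finset.mem_erase.1 hℓ2 with ⟨hℓ3, _⟩
          simp [hG, hℓ1, hℓ3]
        rw [Finset.prod_congr rfl hrest]
        have hGi : G x i = -x i := by simp [hG]
        have hGi' : G x i' = -x i' := by simp [hG]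
        rw [hGi, hGi']; ring
      rw [hprod, h2]
  have hGG : ∀ x : Fin L → ℝ, G (G x) = x := by
    intro x; funext ℓ
    by_cases hc : ℓ = i ∨ ℓ = i' <;> simp [hG, hc]
  have hflip : ∀ x ∈ UpsFin L, ∏ ℓ ∈ T, G x ℓ = - ∏ ℓ ∈ T, x ℓ := by
    intro x _
    rw [← Finset.mul_prod_erase T (G x) hi, ← Finset.mul_prod_erase T x hi]
    have hrest : ∀ ℓ ∈ T.erase i, G x ℓ = x ℓ := by
      intro ℓ hℓ
      rcases Finset.mem_erase.1 hℓ with ⟨hℓi, hℓT⟩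
      have hℓi' : ℓ ≠ i' := fun h => hi' (h ▸ hℓT)
      simp [hG, hℓi, hℓi']
    rw [Finset.prod_congr rfl hrest]
    have hGi : G x i = -x i := by simp [hG]
    rw [hGi]; ring
  refine Finset.sum_involution (fun x _ => G x) ?_ ?_ (fun x hx => hGmem x hx)
    (fun x _ => hGG x)
  · intro x hx
    rw [hflip x hx]; ring
  · intro x hx _
    intro hEq
    have hci : G x i = x i := congrFun hEq i
    have hGi : G x i = -x i := by simp [hG]
    rw [hGi] at hci
    rcases (mem_UpsFin.1 hx).1 i with h | h <;> rw [h] at hci <;> norm_num at hci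

/-! ### Integration against `nuL` -/

lemma integrableOn_count_finset {α : Type*} [MeasurableSpace α] [MeasurableSingletonClass α]
    (s : Finset α) (f : α → ℝ) : IntegrableOn f (↑s) Measure.count := by
  have hset : (↑s : Set α) = ⋃ i ∈ s, {i} := by ext a; simp
  rw [hset, integrableOn_finset_iUnion]
  intro i _
  rw [integrableOn_singleton_iff]
  right
  rw [Measure.count_singleton]
  exact ENNReal.one_lt_top

lemma integral_nuL {L : ℕ} (f : (Fin L → ℝ) → ℝ) :
    ∫ v, f v ∂nuL L = (2 ^ (L - 1) : ℝ)⁻¹ * ∑ x ∈ UpsFin L, f x := by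
  rw [nuL, integral_smul_measure, ← coe_UpsFin]
  rw [integral_finset]
  simp only [Measure.count_singleton, MeasureTheory.count_real_singleton, ENNReal.toReal_one, one_smul, one_mul, smul_eq_mul]
  have h2 : ((2 : ℝ≥0∞) ^ (L - 1))⁻¹.toReal = (2 ^ (L - 1) : ℝ)⁻¹ := by
    simp [ENNReal.toReal_inv, ENNReal.toReal_pow]
  rw [h2]
  exact integrableOn_count_finset _ f

lemma isProb_nuL {L : ℕ} (hL : 1 ≤ L) : IsProbabilityMeasure (nuL L) := by
  constructor
  rw [nuL, Measure.smul_apply, Measure.restrict_apply_univ, ← coe_UpsFin,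
    Measure.count_apply_finset, card_UpsFin hL, smul_eq_mul]
  rw [Nat.cast_pow, Nat.cast_ofNat]
  exact ENNReal.inv_mul_cancel (by positivity) (ENNReal.pow_ne_top ENNReal.ofNat_ne_top)

lemma ae_nuL {L : ℕ} : ∀ᵐ v ∂nuL L, v ∈ Upsilon L := by
  rw [ae_iff]
  have hmeas : MeasurableSet (Upsilon L) := by
    rw [← coe_UpsFin]; exact (UpsFin L).measurableSet
  have hset : {v : Fin L → ℝ | ¬ v ∈ Upsilon L} = (Upsilon L)ᶜ := rfl
  rw [hset, nuL, Measure.smul_apply, Measure.restrict_apply hmeas.compl,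
    Set.compl_inter_self, measure_empty, smul_zero]

/-! ### Consequences of Condition H -/

lemma mu_ae_abs_le {L n : ℕ} {μ : Measure (Fin n → ℝ)} (hH : CondH L n μ) :
    ∀ᵐ x ∂μ, ∀ i, |x i| ≤ Real.sqrt 3 := by
  rw [ae_all_iff]
  intro i
  have hset : MeasurableSet {r : ℝ | ¬ |r| ≤ Real.sqrt 3} :=
    (measurableSet_le measurable_abs measurable_const).compl
  rw [ae_iff]
  have hpre : {x : Fin n → ℝ | ¬ |x i| ≤ Real.sqrt 3}
      = (fun x : Fin n → ℝ => x i) ⁻¹' {r | ¬ |r| ≤ Real.sqrt 3} := rfl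
  rw [hpre, ← Measure.map_apply (measurable_pi_apply i) hset, hH.marginal i]
  rw [lambdaUnps3, Measure.smul_apply, Measure.restrict_apply hset]
  have hempty : {r : ℝ | ¬ |r| ≤ Real.sqrt 3} ∩ Set.Icc (-(Real.sqrt 3)) (Real.sqrt 3) = ∅ :=
    Set.eq_empty_iff_forall_notMem.2 fun r hr => hr.1 (abs_le.2 hr.2)
  rw [hempty, measure_empty, smul_zero]

lemma volume_hyperplane11 (n : ℕ) (hn : 1 ≤ n) :
    (volume : Measure (Fin n → ℝ)) {x | ∑ i, x i = 0} = 0 := by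
  classical
  let l : (Fin n → ℝ) →ₗ[ℝ] ℝ := ∑ i, LinearMap.proj i
  have hl : ∀ x : Fin n → ℝ, l x = ∑ i, x i := by
    intro x
    simp [l, LinearMap.sum_apply, LinearMap.proj_apply]
  have hker : {x : Fin n → ℝ | ∑ i, x i = 0} = (LinearMap.ker l : Set (Fin n → ℝ)) := by
    ext x
    simp [LinearMap.mem_ker, hl]
  rw [hker]
  refine Measure.addHaar_submodule _ _ ?_
  intro htop
  have h1 : (fun _ : Fin n => (1 : ℝ)) ∈ LinearMap.ker l := htop ▸ Submodule.mem_top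
  rw [LinearMap.mem_ker, hl] at h1
  rw [Finset.sum_const, Finset.card_univ, Fintype.card_fin, nsmul_eq_mul, mul_one] at h1
  have hne : (n : ℝ) ≠ 0 := Nat.cast_ne_zero.2 (by omega)
  exact hne h1

lemma prod_neg_eq11 {α : Type*} (J : Finset α) (f : α → ℝ) :
    ∏ j ∈ J, -f j = (-1) ^ J.card * ∏ j ∈ J, f j := by
  calc ∏ j ∈ J, -f j = ∏ j ∈ J, (-1) * f j := by simp only [neg_one_mul]
    _ = (∏ _j ∈ J, (-1 : ℝ)) * ∏ j ∈ J, f j := Finset.prod_mul_distrib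
    _ = _ := by rw [Finset.prod_const]

lemma odd_moment11 {L n : ℕ} {μ : Measure (Fin n → ℝ)} (hH : CondH L n μ)
    {m : ℕ} (J : Finset (Fin m)) (d : Fin m → Fin n) (hJ : Odd J.card) :
    ∫ x, ∏ j ∈ J, x (d j) ∂μ = 0 := by
  have hmeas : Measurable fun x : Fin n → ℝ => ∏ j ∈ J, x (d j) :=
    Finset.measurable_prod _ fun j _ => measurable_pi_apply (d j)
  have h1 : ∫ x, ∏ j ∈ J, x (d j) ∂μ = ∫ x, ∏ j ∈ J, (-x) (d j) ∂μ := by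
    conv_lhs => rw [← hH.neg_inv]
    rw [integral_map measurable_neg.aemeasurable hmeas.aestronglyMeasurable]
  have h2 : (fun x : Fin n → ℝ => ∏ j ∈ J, (-x) (d j))
      = fun x => - ∏ j ∈ J, x (d j) := by
    funext x
    have : ∏ j ∈ J, (-x) (d j) = ∏ j ∈ J, -(x (d j)) := rfl
    rw [this, prod_neg_eq11, hJ.neg_one_pow, neg_one_mul]
  rw [h2] at h1
  rw [integral_neg] at h1
  linarith

lemma even_phi_moment11 {L n : ℕ} {μ : Measure (Fin n → ℝ)} (hH : CondH L n μ) (hn : 1 ≤ n)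
    {m : ℕ} (J : Finset (Fin m)) (d : Fin m → Fin n) (hJ : Even J.card) :
    ∫ x, ∏ j ∈ J, phi n x (d j) ∂μ = ∫ x, ∏ j ∈ J, x (d j) ∂μ := by
  have h0 : ∀ᵐ x ∂μ, ¬ ((∑ i, x i) = 0) := by
    rw [ae_iff]
    have hset : {x : Fin n → ℝ | ¬ ¬ ((∑ i, x i) = 0)} = {x | ∑ i, x i = 0} := by
      ext x; simp
    rw [hset]
    exact hH.abs_cont (volume_hyperplane11 n hn)
  apply integral_congr_ae
  filter_upwards [h0] with x hx
  rcases phi_eq_or11 n x hx with h | h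
  · rw [h]
  · rw [h]
    have : ∏ j ∈ J, (-x) (d j) = ∏ j ∈ J, -(x (d j)) := rfl
    rw [this, prod_neg_eq11, hJ.neg_one_pow, one_mul]

lemma integrable_block_phi11 {L n : ℕ} {μ : Measure (Fin n → ℝ)} [IsProbabilityMeasure μ]
    (hH : CondH L n μ) {m : ℕ} (J : Finset (Fin m)) (d : Fin m → Fin n) :
    Integrable (fun x : Fin n → ℝ => ∏ j ∈ J, phi n x (d j)) μ := by
  have hmeas : Measurable fun x : Fin n → ℝ => ∏ j ∈ J, phi n x (d j) :=
    Finset.measurable_prod _ fun j _ => (measurable_pi_apply (d j)).comp (measurable_phi11 n)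
  refine (integrable_const ((Real.sqrt 3) ^ J.card)).mono' hmeas.aestronglyMeasurable ?_
  filter_upwards [mu_ae_abs_le hH] with x hx
  rw [Real.norm_eq_abs, Finset.abs_prod]
  calc ∏ j ∈ J, |phi n x (d j)| ≤ ∏ _j ∈ J, Real.sqrt 3 :=
      Finset.prod_le_prod (fun j _ => abs_nonneg _)
        (fun j _ => (abs_phi_le11 n x (d j)).trans (hx (d j)))
    _ = _ := Finset.prod_const _

lemma integrable_block11 {L n : ℕ} {μ : Measure (Fin n → ℝ)} [IsProbabilityMeasure μ]
    (hH : CondH L n μ) {m : ℕ} (J : Finset (Fin m)) (d : Fin m → Fin n) :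
    Integrable (fun x : Fin n → ℝ => ∏ j ∈ J, x (d j)) μ := by
  have hmeas : Measurable fun x : Fin n → ℝ => ∏ j ∈ J, x (d j) :=
    Finset.measurable_prod _ fun j _ => measurable_pi_apply (d j)
  refine (integrable_const ((Real.sqrt 3) ^ J.card)).mono' hmeas.aestronglyMeasurable ?_
  filter_upwards [mu_ae_abs_le hH] with x hx
  rw [Real.norm_eq_abs, Finset.abs_prod]
  calc ∏ j ∈ J, |x (d j)| ≤ ∏ _j ∈ J, Real.sqrt 3 :=
      Finset.prod_le_prod (fun j _ => abs_nonneg _) (fun j _ => hx (d j))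
    _ = _ := Finset.prod_const _

/-! ### Product integrals over `Measure.pi` -/

lemma integral_pi_prod11 {n L : ℕ} (μ : Measure (Fin n → ℝ)) [SigmaFinite μ]
    (F : Fin L → (Fin n → ℝ) → ℝ) :
    ∫ w, ∏ ℓ, F ℓ (w ℓ) ∂(Measure.pi fun _ : Fin L => μ) = ∏ ℓ, ∫ x, F ℓ x ∂μ :=
  MeasureTheory.integral_fintype_prod_eq_prod (f := F) (μ := fun _ => μ)

lemma integrable_pi_prod11 {n L : ℕ} (μ : Measure (Fin n → ℝ)) [SigmaFinite μ]
    (F : Fin L → (Fin n → ℝ) → ℝ) (hF : ∀ ℓ, Integrable (F ℓ) μ) :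
    Integrable (fun w : Fin L → Fin n → ℝ => ∏ ℓ, F ℓ (w ℓ)) (Measure.pi fun _ : Fin L => μ) :=
  MeasureTheory.Integrable.fintype_prod (f := F) (μ := fun _ => μ) hF

lemma prod_fiber11 {L M : ℕ} (c : Fin M → Fin L) (G : Fin L → Fin M → ℝ) :
    ∏ j, G (c j) j = ∏ ℓ, ∏ j ∈ Finset.univ.filter (fun j => c j = ℓ), G ℓ j := by
  classical
  rw [← Finset.prod_fiberwise_of_maps_to (fun j (_ : j ∈ Finset.univ) => Finset.mem_univ (c j))
    (fun j => G (c j) j)]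
  refine Finset.prod_congr rfl fun ℓ _ => Finset.prod_congr rfl fun j hj => ?_
  rw [(Finset.mem_filter.1 hj).2]

lemma integrable_vpart11 {L M : ℕ} (hL : 1 ≤ L) (c : Fin M → Fin L) :
    Integrable (fun v : Fin L → ℝ => ∏ j, v (c j)) (nuL L) := by
  haveI := isProb_nuL hL
  have hmeas : Measurable fun v : Fin L → ℝ => ∏ j, v (c j) :=
    Finset.measurable_prod _ fun j _ => measurable_pi_apply (c j)
  refine (integrable_const (1 : ℝ)).mono' hmeas.aestronglyMeasurable ?_
  filter_upwards [ae_nuL] with v hv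
  rw [Real.norm_eq_abs, Finset.abs_prod]
  have habs : ∀ j : Fin M, |v (c j)| = 1 := by
    intro j
    rcases hv.1 (c j) with h | h <;> rw [h] <;> simp
  have hprod1 : ∏ j, |v (c j)| = 1 := by
    rw [Finset.prod_congr rfl fun j _ => habs j, Finset.prod_const_one]
  rw [hprod1]

/-! ### The core moment computation -/

lemma core11 {L n : ℕ} (hL6 : 6 ≤ L) (hn : 1 ≤ n)
    (μ : Measure (Fin n → ℝ)) [IsProbabilityMeasure μ] (hH : CondH L n μ)
    {M : ℕ} (hML : M ≤ L - 1) (c : Fin M → Fin L) (d : Fin M → Fin n) :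
    ((∫ p : (Fin L → ℝ) × (Fin L → Fin n → ℝ),
        ∏ j, p.1 (c j) * phi n (p.2 (c j)) (d j) ∂((nuL L).prod (Measure.pi fun _ : Fin L => μ)))
      = ∫ w : Fin L → Fin n → ℝ, ∏ j, w (c j) (d j) ∂(Measure.pi fun _ : Fin L => μ))
    ∧ (¬ (∀ ℓ : Fin L, Even ((Finset.univ.filter fun j => c j = ℓ).card)) →
      (∫ p : (Fin L → ℝ) × (Fin L → Fin n → ℝ),
        ∏ j, p.1 (c j) * phi n (p.2 (c j)) (d j)
          ∂((nuL L).prod (Measure.pi fun _ : Fin L => μ))) = 0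
      ∧ (∫ w : Fin L → Fin n → ℝ, ∏ j, w (c j) (d j) ∂(Measure.pi fun _ : Fin L => μ)) = 0) := by
  classical
  haveI : IsProbabilityMeasure (nuL L) := isProb_nuL (by omega)
  set m : Fin L → ℕ := fun ℓ => (Finset.univ.filter fun j => c j = ℓ).card with hm
  have hA : (∫ p : (Fin L → ℝ) × (Fin L → Fin n → ℝ),
        ∏ j, p.1 (c j) * phi n (p.2 (c j)) (d j) ∂((nuL L).prod (Measure.pi fun _ : Fin L => μ)))
      = (∫ v, ∏ j, v (c j) ∂nuL L)
        * ∫ w, ∏ j, phi n (w (c j)) (d j) ∂(Measure.pi fun _ : Fin L => μ) := by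
    calc (∫ p : (Fin L → ℝ) × (Fin L → Fin n → ℝ),
          ∏ j, p.1 (c j) * phi n (p.2 (c j)) (d j) ∂((nuL L).prod (Measure.pi fun _ : Fin L => μ)))
        = ∫ p : (Fin L → ℝ) × (Fin L → Fin n → ℝ),
            (∏ j, p.1 (c j)) * ∏ j, phi n (p.2 (c j)) (d j)
              ∂((nuL L).prod (Measure.pi fun _ : Fin L => μ)) := by
          refine integral_congr_ae (Filter.Eventually.of_forall fun p => ?_)
          exact Finset.prod_mul_distrib
      _ = _ := integral_prod_mul (fun v : Fin L → ℝ => ∏ j, v (c j))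
        (fun w : Fin L → Fin n → ℝ => ∏ j, phi n (w (c j)) (d j))
  have hWphi : ∫ w, ∏ j, phi n (w (c j)) (d j) ∂(Measure.pi fun _ : Fin L => μ)
      = ∏ ℓ, ∫ x, ∏ j ∈ Finset.univ.filter (fun j => c j = ℓ), phi n x (d j) ∂μ := by
    have h1 : (fun w : Fin L → Fin n → ℝ => ∏ j, phi n (w (c j)) (d j))
        = fun w => ∏ ℓ, ∏ j ∈ Finset.univ.filter (fun j => c j = ℓ), phi n (w ℓ) (d j) :=
      funext fun w => prod_fiber11 c (fun ℓ j => phi n (w ℓ) (d j))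
    rw [h1]
    exact integral_pi_prod11 μ
      (fun ℓ x => ∏ j ∈ Finset.univ.filter (fun j => c j = ℓ), phi n x (d j))
  have hW : ∫ w, ∏ j, w (c j) (d j) ∂(Measure.pi fun _ : Fin L => μ)
      = ∏ ℓ, ∫ x, ∏ j ∈ Finset.univ.filter (fun j => c j = ℓ), x (d j) ∂μ := by
    have h1 : (fun w : Fin L → Fin n → ℝ => ∏ j, w (c j) (d j))
        = fun w => ∏ ℓ, ∏ j ∈ Finset.univ.filter (fun j => c j = ℓ), (w ℓ) (d j) :=
      funext fun w => prod_fiber11 c (fun ℓ j => w ℓ (d j))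
    rw [h1]
    exact integral_pi_prod11 μ
      (fun ℓ x => ∏ j ∈ Finset.univ.filter (fun j => c j = ℓ), x (d j))
  have hV : ∫ v, ∏ j, v (c j) ∂nuL L
      = (2 ^ (L - 1) : ℝ)⁻¹ * ∑ x ∈ UpsFin L, ∏ ℓ, x ℓ ^ m ℓ := by
    rw [integral_nuL]
    congr 1
    refine Finset.sum_congr rfl fun x _ => ?_
    rw [prod_fiber11 c (fun ℓ _ => x ℓ)]
    exact Finset.prod_congr rfl fun ℓ _ => Finset.prod_const _
  by_cases hall : ∀ ℓ : Fin L, Even (m ℓ)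
  · have hV1 : ∫ v, ∏ j, v (c j) ∂nuL L = 1 := by
      rw [hV]
      have hone : ∀ x ∈ UpsFin L, ∏ ℓ, x ℓ ^ m ℓ = 1 := by
        intro x hx
        refine Finset.prod_eq_one fun ℓ _ => ?_
        rcases (mem_UpsFin.1 hx).1 ℓ with h | h
        · rw [h, one_pow]
        · rw [h, (hall ℓ).neg_one_pow]
      rw [Finset.sum_congr rfl hone, Finset.sum_const, card_UpsFin (by omega), nsmul_eq_mul,
        mul_one]
      push_cast
      rw [inv_mul_cancel₀]
      positivity
    have heach : ∀ ℓ : Fin L,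
        ∫ x, ∏ j ∈ Finset.univ.filter (fun j => c j = ℓ), phi n x (d j) ∂μ
          = ∫ x, ∏ j ∈ Finset.univ.filter (fun j => c j = ℓ), x (d j) ∂μ :=
      fun ℓ => even_phi_moment11 hH hn _ d (hall ℓ)
    refine ⟨?_, fun h => absurd hall h⟩
    rw [hA, hV1, one_mul, hWphi, hW]
    exact Finset.prod_congr rfl fun ℓ _ => heach ℓ
  · have hex : ∃ ℓ, ¬ Even (m ℓ) := by push_neg at hall; exact hall
    set T : Finset (Fin L) := Finset.univ.filter (fun ℓ => ¬ Even (m ℓ)) with hT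
    obtain ⟨ℓ0, hℓ0⟩ := hex
    have hℓ0T : ℓ0 ∈ T := Finset.mem_filter.2 ⟨Finset.mem_univ _, hℓ0⟩
    have hTne : T.Nonempty := ⟨ℓ0, hℓ0T⟩
    have hmsum : ∑ ℓ, m ℓ = M := by
      have hcf := Finset.card_eq_sum_card_fiberwise
        (f := c) (s := Finset.univ) (t := Finset.univ) (fun j _ => Finset.mem_univ (c j))
      simpa [hm] using hcf.symm
    have hTu : T ≠ Finset.univ := by
      intro hEq
      have h1 : ∀ ℓ : Fin L, 1 ≤ m ℓ := by
        intro ℓ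
        have hℓ : ℓ ∈ T := hEq ▸ Finset.mem_univ ℓ
        have hodd := (Finset.mem_filter.1 hℓ).2
        rcases Nat.eq_zero_or_pos (m ℓ) with h | h
        · exact absurd (h ▸ Even.zero) hodd
        · exact h
      have hLM : L ≤ M := by
        calc L = ∑ _ℓ : Fin L, 1 := by simp
          _ ≤ ∑ ℓ, m ℓ := Finset.sum_le_sum fun ℓ _ => h1 ℓ
          _ = M := hmsum
      omega
    have hV0 : ∫ v, ∏ j, v (c j) ∂nuL L = 0 := by
      rw [hV]
      have hchar : ∀ x ∈ UpsFin L, ∏ ℓ, x ℓ ^ m ℓ = ∏ ℓ ∈ T, x ℓ := by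
        intro x hx
        rw [← Finset.prod_filter_mul_prod_filter_not Finset.univ (fun ℓ => ¬ Even (m ℓ))
          (fun ℓ => x ℓ ^ m ℓ)]
        have hT1 : ∏ ℓ ∈ Finset.univ.filter (fun ℓ => ¬ Even (m ℓ)), x ℓ ^ m ℓ
            = ∏ ℓ ∈ T, x ℓ := by
          refine Finset.prod_congr rfl fun ℓ hℓ => ?_
          have hodd : Odd (m ℓ) := Nat.not_even_iff_odd.1 (Finset.mem_filter.1 hℓ).2
          rcases (mem_UpsFin.1 hx).1 ℓ with h | h
          · rw [h, one_pow]
          · rw [h, hodd.neg_one_pow]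
        have hT2 : ∏ ℓ ∈ Finset.univ.filter (fun ℓ => ¬ ¬ Even (m ℓ)), x ℓ ^ m ℓ = 1 := by
          refine Finset.prod_eq_one fun ℓ hℓ => ?_
          have heven : Even (m ℓ) := not_not.1 (Finset.mem_filter.1 hℓ).2
          rcases (mem_UpsFin.1 hx).1 ℓ with h | h
          · rw [h, one_pow]
          · rw [h, heven.neg_one_pow]
        rw [hT1, hT2, mul_one]
      rw [Finset.sum_congr rfl hchar, sum_UpsFin_eq_zero T hTne hTu, mul_zero]
    have hB0 : ∫ w, ∏ j, w (c j) (d j) ∂(Measure.pi fun _ : Fin L => μ) = 0 := by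
      rw [hW]
      refine Finset.prod_eq_zero (Finset.mem_univ ℓ0) ?_
      exact odd_moment11 hH _ d (Nat.not_even_iff_odd.1 hℓ0)
    have hA0 : (∫ p : (Fin L → ℝ) × (Fin L → Fin n → ℝ),
        ∏ j, p.1 (c j) * phi n (p.2 (c j)) (d j)
          ∂((nuL L).prod (Measure.pi fun _ : Fin L => μ))) = 0 := by
      rw [hA, hV0, zero_mul]
    exact ⟨by rw [hA0, hB0], fun _ => ⟨hA0, hB0⟩⟩

end Stmt11Aux

/-- Lemma 2.8(C)(i): for `1 ≤ M ≤ L-1`, the `M`-th moments of `Σ_{k∈S} Y_k` and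
`Σ_{k∈S} W_k` agree, and vanish when `M` is odd. -/
theorem stmt11 (L : ℕ) (hLeven : Even L) (hL6 : 6 ≤ L) (n : ℕ) (hn : 1 ≤ n)
    (μ : Measure (Fin n → ℝ)) [IsProbabilityMeasure μ] (hH : CondH L n μ)
    {Ω : Type*} [MeasurableSpace Ω] (P : Measure Ω) [IsProbabilityMeasure P]
    (ζ : Fin L → Ω → Fin n → ℝ) (hζmeas : ∀ ℓ, Measurable (ζ ℓ))
    (hζindep : iIndepFun ζ P)
    (hζlaw : ∀ ℓ, Measure.map (ζ ℓ) P = μ)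
    (Y : Ω → Fin (L * n) → ℝ) (hYmeas : Measurable Y)
    (hYlaw : Measure.map Y P = theta L n μ)
    (S : Finset (Fin (L * n))) (hS : S.Nonempty)
    (M : ℕ) (hM1 : 1 ≤ M) (hML : M ≤ L - 1) :
    (∫ ω, (∑ k ∈ S, Y ω k) ^ M ∂P)
      = (∫ ω, (∑ k ∈ S, splice (fun ℓ => ζ ℓ ω) k) ^ M ∂P) ∧
    (Odd M →
      (∫ ω, (∑ k ∈ S, Y ω k) ^ M ∂P) = 0 ∧
      (∫ ω, (∑ k ∈ S, splice (fun ℓ => ζ ℓ ω) k) ^ M ∂P) = 0) := by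
  classical
  haveI hPnu : IsProbabilityMeasure (nuL L) := isProb_nuL (by omega)
  set π : Measure (Fin L → Fin n → ℝ) := Measure.pi fun _ : Fin L => μ with hπdef
  have hζvec : Measurable fun ω => fun ℓ => ζ ℓ ω := measurable_pi_lambda _ hζmeas
  have hmapζ : Measure.map (fun ω ℓ => ζ ℓ ω) P = π := by
    symm
    refine Measure.pi_eq fun s hs => ?_
    rw [Measure.map_apply hζvec (MeasurableSet.univ_pi hs)]
    have hpre : (fun ω ℓ => ζ ℓ ω) ⁻¹' (Set.univ.pi s)
        = ⋂ ℓ ∈ (Finset.univ : Finset (Fin L)), ζ ℓ ⁻¹' s ℓ := by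
      ext ω; simp [Set.mem_pi]
    rw [hpre, hζindep.measure_inter_preimage_eq_mul Finset.univ (fun ℓ _ => hs ℓ)]
    refine Finset.prod_congr rfl fun ℓ _ => ?_
    rw [← hζlaw ℓ, Measure.map_apply (hζmeas ℓ) (hs ℓ)]
  set b : Fin (L * n) → Fin L := fun k => (finProdFinEquiv.symm k).1 with hb
  set e : Fin (L * n) → Fin n := fun k => (finProdFinEquiv.symm k).2 with he
  have expand : ∀ f : Fin (L * n) → ℝ, (∑ k ∈ S, f k) ^ M
      = ∑ t ∈ Fintype.piFinset (fun _ : Fin M => S), ∏ j, f (t j) := by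
    intro f
    rw [← Fin.prod_const M (∑ k ∈ S, f k), Finset.prod_univ_sum]
  have hFmeas : Measurable fun y : Fin (L * n) → ℝ => (∑ k ∈ S, y k) ^ M :=
    (Finset.measurable_sum _ fun k _ => measurable_pi_apply k).pow_const M
  have hF'meas : Measurable fun w : Fin L → Fin n → ℝ => (∑ k ∈ S, w (b k) (e k)) ^ M :=
    (Finset.measurable_sum _ fun k _ =>
      (measurable_pi_apply (e k)).comp (measurable_pi_apply (b k))).pow_const M
  have hg : Measurable fun p : (Fin L → ℝ) × (Fin L → Fin n → ℝ) =>
      splice (fun ℓ => p.1 ℓ • phi n (p.2 ℓ)) := by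
    apply measurable_pi_lambda
    intro k
    show Measurable fun p : (Fin L → ℝ) × (Fin L → Fin n → ℝ) =>
      p.1 (b k) * phi n (p.2 (b k)) (e k)
    exact ((measurable_pi_apply (b k)).comp measurable_fst).mul
      ((measurable_pi_apply (e k)).comp ((measurable_phi11 n).comp
        ((measurable_pi_apply (b k)).comp measurable_snd)))
  have hY1 : ∫ ω, (∑ k ∈ S, Y ω k) ^ M ∂P
      = ∫ p : (Fin L → ℝ) × (Fin L → Fin n → ℝ),
          (∑ k ∈ S, p.1 (b k) * phi n (p.2 (b k)) (e k)) ^ M ∂((nuL L).prod π) := by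
    have h1 : ∫ ω, (∑ k ∈ S, Y ω k) ^ M ∂P = ∫ y, (∑ k ∈ S, y k) ^ M ∂(theta L n μ) := by
      rw [← hYlaw, integral_map hYmeas.aemeasurable hFmeas.aestronglyMeasurable]
    rw [h1]
    unfold theta
    rw [integral_map hg.aemeasurable hFmeas.aestronglyMeasurable]
    refine integral_congr_ae (Filter.Eventually.of_forall fun p => ?_)
    congr 1
  have hint : ∀ t : Fin M → Fin (L * n),
      Integrable (fun p : (Fin L → ℝ) × (Fin L → Fin n → ℝ) =>
        ∏ j, p.1 (b (t j)) * phi n (p.2 (b (t j))) (e (t j))) ((nuL L).prod π) := by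
    intro t
    have hsplit : (fun p : (Fin L → ℝ) × (Fin L → Fin n → ℝ) =>
        ∏ j, p.1 (b (t j)) * phi n (p.2 (b (t j))) (e (t j)))
        = fun p => (∏ j, p.1 (b (t j))) * ∏ j, phi n (p.2 (b (t j))) (e (t j)) :=
      funext fun p => Finset.prod_mul_distrib
    rw [hsplit]
    refine Integrable.mul_prod (f := fun v : Fin L → ℝ => ∏ j, v (b (t j)))
      (g := fun w : Fin L → Fin n → ℝ => ∏ j, phi n (w (b (t j))) (e (t j)))
      (integrable_vpart11 (show 1 ≤ L by omega) _) ?_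
    have h1 : (fun w : Fin L → Fin n → ℝ => ∏ j, phi n (w (b (t j))) (e (t j)))
        = fun w => ∏ ℓ, ∏ j ∈ Finset.univ.filter (fun j => b (t j) = ℓ),
            phi n (w ℓ) (e (t j)) :=
      funext fun w => prod_fiber11 (fun j => b (t j)) (fun ℓ j => phi n (w ℓ) (e (t j)))
    rw [h1]
    exact integrable_pi_prod11 μ
      (fun ℓ x => ∏ j ∈ Finset.univ.filter (fun j => b (t j) = ℓ), phi n x (e (t j)))
      fun ℓ => integrable_block_phi11 hH _ _
  have hint' : ∀ t : Fin M → Fin (L * n),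
      Integrable (fun w : Fin L → Fin n → ℝ => ∏ j, w (b (t j)) (e (t j))) π := by
    intro t
    have h1 : (fun w : Fin L → Fin n → ℝ => ∏ j, w (b (t j)) (e (t j)))
        = fun w => ∏ ℓ, ∏ j ∈ Finset.univ.filter (fun j => b (t j) = ℓ), (w ℓ) (e (t j)) :=
      funext fun w => prod_fiber11 (fun j => b (t j)) (fun ℓ j => w ℓ (e (t j)))
    rw [h1]
    exact integrable_pi_prod11 μ
      (fun ℓ x => ∏ j ∈ Finset.univ.filter (fun j => b (t j) = ℓ), x (e (t j)))
      fun ℓ => integrable_block11 hH _ _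
  have hY2 : ∫ p : (Fin L → ℝ) × (Fin L → Fin n → ℝ),
        (∑ k ∈ S, p.1 (b k) * phi n (p.2 (b k)) (e k)) ^ M ∂((nuL L).prod π)
      = ∑ t ∈ Fintype.piFinset (fun _ : Fin M => S),
          ∫ p : (Fin L → ℝ) × (Fin L → Fin n → ℝ),
            ∏ j, p.1 (b (t j)) * phi n (p.2 (b (t j))) (e (t j)) ∂((nuL L).prod π) := by
    calc ∫ p : (Fin L → ℝ) × (Fin L → Fin n → ℝ),
          (∑ k ∈ S, p.1 (b k) * phi n (p.2 (b k)) (e k)) ^ M ∂((nuL L).prod π)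
        = ∫ p : (Fin L → ℝ) × (Fin L → Fin n → ℝ),
            ∑ t ∈ Fintype.piFinset (fun _ : Fin M => S),
              ∏ j, p.1 (b (t j)) * phi n (p.2 (b (t j))) (e (t j)) ∂((nuL L).prod π) :=
          integral_congr_ae (Filter.Eventually.of_forall fun p =>
            expand fun k => p.1 (b k) * phi n (p.2 (b k)) (e k))
      _ = _ := integral_finsetSum _ fun t _ => hint t
  have hW1 : ∫ ω, (∑ k ∈ S, splice (fun ℓ => ζ ℓ ω) k) ^ M ∂P
      = ∫ w : Fin L → Fin n → ℝ, (∑ k ∈ S, w (b k) (e k)) ^ M ∂π := by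
    rw [← hmapζ, integral_map hζvec.aemeasurable hF'meas.aestronglyMeasurable]
    refine integral_congr_ae (Filter.Eventually.of_forall fun ω => ?_)
    congr 1
  have hW2 : ∫ w : Fin L → Fin n → ℝ, (∑ k ∈ S, w (b k) (e k)) ^ M ∂π
      = ∑ t ∈ Fintype.piFinset (fun _ : Fin M => S),
          ∫ w : Fin L → Fin n → ℝ, ∏ j, w (b (t j)) (e (t j)) ∂π := by
    calc ∫ w : Fin L → Fin n → ℝ, (∑ k ∈ S, w (b k) (e k)) ^ M ∂π
        = ∫ w : Fin L → Fin n → ℝ,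
            ∑ t ∈ Fintype.piFinset (fun _ : Fin M => S),
              ∏ j, w (b (t j)) (e (t j)) ∂π :=
          integral_congr_ae (Filter.Eventually.of_forall fun w =>
            expand fun k => w (b k) (e k))
      _ = _ := integral_finsetSum _ fun t _ => hint' t
  have hterm : ∀ t : Fin M → Fin (L * n),
      ∫ p : (Fin L → ℝ) × (Fin L → Fin n → ℝ),
          ∏ j, p.1 (b (t j)) * phi n (p.2 (b (t j))) (e (t j)) ∂((nuL L).prod π)
        = ∫ w : Fin L → Fin n → ℝ, ∏ j, w (b (t j)) (e (t j)) ∂π :=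
    fun t => (core11 hL6 hn μ hH hML (fun j => b (t j)) (fun j => e (t j))).1
  have hmain : (∫ ω, (∑ k ∈ S, Y ω k) ^ M ∂P)
      = ∫ ω, (∑ k ∈ S, splice (fun ℓ => ζ ℓ ω) k) ^ M ∂P := by
    rw [hY1, hY2, hW1, hW2]
    exact Finset.sum_congr rfl fun t _ => hterm t
  refine ⟨hmain, fun hodd => ?_⟩
  have hzero : ∀ t : Fin M → Fin (L * n),
      (∫ p : (Fin L → ℝ) × (Fin L → Fin n → ℝ),
          ∏ j, p.1 (b (t j)) * phi n (p.2 (b (t j))) (e (t j)) ∂((nuL L).prod π)) = 0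
      ∧ (∫ w : Fin L → Fin n → ℝ, ∏ j, w (b (t j)) (e (t j)) ∂π) = 0 := by
    intro t
    refine (core11 hL6 hn μ hH hML (fun j => b (t j)) (fun j => e (t j))).2 ?_
    intro hall
    have hMeven : Even M := by
      have hmsum : ∑ ℓ : Fin L,
          (Finset.univ.filter fun j => (fun j => b (t j)) j = ℓ).card = M := by
        have hcf := Finset.card_eq_sum_card_fiberwise
          (f := fun j => b (t j)) (s := Finset.univ) (t := Finset.univ)
          (fun j _ => Finset.mem_univ _)
        simpa using hcf.symm
      rw [← hmsum]
      exact Finset.even_sum _ fun ℓ _ => hall ℓ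
    exact (Nat.not_even_iff_odd.2 hodd) hMeven
  constructor
  · rw [hY1, hY2]
    exact Finset.sum_eq_zero fun t _ => (hzero t).1
  · rw [hW1, hW2]
    exact Finset.sum_eq_zero fun t _ => (hzero t).2
end
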